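/- arXiv:math/0408178 — 6 statements merged into one kernel-verified Lean document; each statement's English description precedes it below -/
import Mathlib

section
/- Let (ξ₁, ξ₂) be a pair of nonnegative real random variables belonging to the class 𝒦, with associated random variable V, and let μ_V denote the law of V (equivalently, of ξ₁ + ξ₂). Then for every x > 0, P(ξ₁ > x) = ∫_x^∞ ( ∫_{[t,∞)} v^{-1} μ_V(dv) ) dt; in other words, on (0,∞) the law of ξ₁ is absolutely continuous with respect to Lebesgue measure with density g(t) = ∫_{[t,∞)} v^{-1} μ_V(dv). -/
open MeasureTheory ProbabilityTheory

/-- If `(ξ₁, ξ₂)` belongs to the class `𝒦` with associated random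
variable `V`, and `μ_V` is the law of `V`, then for every `x > 0`,
`P(ξ₁ > x) = ∫_x^∞ (∫_{[t,∞)} v⁻¹ μ_V(dv)) dt`, i.e. on `(0,∞)` the law of
`ξ₁` has density `t ↦ ∫_{[t,∞)} v⁻¹ μ_V(dv)` with respect to Lebesgue measure. -/
theorem stmt1 {Ω Ω' : Type*} [MeasurableSpace Ω] [MeasurableSpace Ω']
    (P : Measure Ω) [IsProbabilityMeasure P]
    (P' : Measure Ω') [IsProbabilityMeasure P']
    (ξ₁ ξ₂ : Ω → ℝ) (hξ₁m : Measurable ξ₁) (hξ₂m : Measurable ξ₂)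
    (hξ₁0 : ∀ ω, 0 ≤ ξ₁ ω) (hξ₂0 : ∀ ω, 0 ≤ ξ₂ ω)
    (V s : Ω' → ℝ) (hVm : Measurable V) (hsm : Measurable s)
    (hV0 : ∀ ω, 0 ≤ V ω)
    (hsUnif : P'.map s = volume.restrict (Set.Ioo (0:ℝ) 1))
    (hIndep : IndepFun V s P')
    (hlaw : P.map (fun ω => (ξ₁ ω, ξ₂ ω)) =
      P'.map (fun ω => (s ω * V ω, (1 - s ω) * V ω))) :
    ∀ x : ℝ, 0 < x →
      P {ω | x < ξ₁ ω} =
        ∫⁻ t in Set.Ioi x,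
          (∫⁻ v in Set.Ici t, ENNReal.ofReal v⁻¹ ∂(P'.map V)) ∂volume := by
  intro x hx
  haveI : IsProbabilityMeasure (P'.map s) := Measure.isProbabilityMeasure_map hsm.aemeasurable
  haveI : IsProbabilityMeasure (P'.map V) := Measure.isProbabilityMeasure_map hVm.aemeasurable
  set μV := P'.map V with hμV
  -- pointwise computation of the uniform probability
  have key : ∀ v : ℝ, (volume.restrict (Set.Ioo (0:ℝ) 1)) {u : ℝ | x < u * v}
      = ENNReal.ofReal v⁻¹ * ENNReal.ofReal (v - x) := by
    intro v
    have hmv : MeasurableSet {u : ℝ | x < u * v} :=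
      measurableSet_lt measurable_const (measurable_id.mul_const v)
    rw [Measure.restrict_apply hmv]
    rcases le_or_gt v 0 with hv | hv
    · have h1 : {u : ℝ | x < u * v} ∩ Set.Ioo 0 1 = ∅ := by
        ext u
        simp only [Set.mem_inter_iff, Set.mem_setOf_eq, Set.mem_Ioo,
          Set.mem_empty_iff_false, iff_false, not_and]
        intro h hu0
        have : u * v ≤ 0 := mul_nonpos_of_nonneg_of_nonpos hu0.le hv
        exfalso; linarith
      have h2 : ENNReal.ofReal v⁻¹ = 0 := by
        simp [ENNReal.ofReal_eq_zero, inv_nonpos.mpr hv]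
      rw [h1, h2]; simp
    · have h1 : {u : ℝ | x < u * v} ∩ Set.Ioo 0 1 = Set.Ioo (x / v) 1 := by
        ext u
        simp only [Set.mem_inter_iff, Set.mem_setOf_eq, Set.mem_Ioo]
        constructor
        · rintro ⟨h, _, hu1⟩; exact ⟨(div_lt_iff₀ hv).2 h, hu1⟩
        · rintro ⟨h, hu1⟩
          exact ⟨(div_lt_iff₀ hv).1 h, lt_trans (div_pos hx hv) h, hu1⟩
      rw [h1, Real.volume_Ioo, ← ENNReal.ofReal_mul (inv_nonneg.mpr hv.le)]
      congr 1
      field_simp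
  -- step 1: transfer to P'
  have hsetm : MeasurableSet {p : ℝ × ℝ | x < p.1} :=
    measurableSet_lt measurable_const measurable_fst
  have h1 : P {ω | x < ξ₁ ω} = P' {ω | x < s ω * V ω} := by
    calc P {ω | x < ξ₁ ω}
        = P.map (fun ω => (ξ₁ ω, ξ₂ ω)) {p : ℝ × ℝ | x < p.1} := by
          rw [Measure.map_apply (hξ₁m.prodMk hξ₂m) hsetm]; rfl
      _ = P'.map (fun ω => (s ω * V ω, (1 - s ω) * V ω)) {p : ℝ × ℝ | x < p.1} := by
          rw [hlaw]
      _ = P' {ω | x < s ω * V ω} := by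
          rw [Measure.map_apply (f := fun ω => (s ω * V ω, (1 - s ω) * V ω)) ((hsm.mul hVm).prodMk
            ((measurable_const.sub hsm).mul hVm)) hsetm]; rfl
  -- step 2: independence, joint law is product
  have hprod : P'.map (fun ω => (V ω, s ω)) = μV.prod (P'.map s) :=
    (indepFun_iff_map_prod_eq_prod_map_map hVm.aemeasurable hsm.aemeasurable).mp hIndep
  have hsetm2 : MeasurableSet {p : ℝ × ℝ | x < p.2 * p.1} :=
    measurableSet_lt measurable_const (measurable_snd.mul measurable_fst)
  have h2 : P' {ω | x < s ω * V ω}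
      = ∫⁻ v, ENNReal.ofReal v⁻¹ * ENNReal.ofReal (v - x) ∂μV := by
    have e1 : P' {ω | x < s ω * V ω}
        = (μV.prod (P'.map s)) {p : ℝ × ℝ | x < p.2 * p.1} := by
      rw [← hprod, Measure.map_apply (hVm.prodMk hsm) hsetm2]; rfl
    rw [e1, Measure.prod_apply hsetm2, hsUnif]
    refine lintegral_congr fun v => ?_
    have e2 : Prod.mk v ⁻¹' {p : ℝ × ℝ | x < p.2 * p.1} = {u : ℝ | x < u * v} := rfl
    rw [e2, key v]
  -- step 3: Tonelli for the RHS
  have h3 : (∫⁻ t in Set.Ioi x, (∫⁻ v in Set.Ici t, ENNReal.ofReal v⁻¹ ∂μV) ∂volume)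
      = ∫⁻ v, ENNReal.ofReal v⁻¹ * ENNReal.ofReal (v - x) ∂μV := by
    have hfm : AEMeasurable (Function.uncurry
        (fun t v : ℝ => Set.indicator (Set.Ici t) (fun w => ENNReal.ofReal w⁻¹) v))
        ((volume.restrict (Set.Ioi x)).prod μV) := by
      have heq : (Function.uncurry
          (fun t v : ℝ => Set.indicator (Set.Ici t) (fun w => ENNReal.ofReal w⁻¹) v))
          = Set.indicator {p : ℝ × ℝ | p.1 ≤ p.2} (fun p => ENNReal.ofReal p.2⁻¹) := by
        funext p
        by_cases h : p.1 ≤ p.2 <;>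
          simp [Function.uncurry, Set.indicator, Set.mem_Ici, h]
      rw [heq]
      exact ((measurable_snd.inv.ennreal_ofReal).indicator
        (measurableSet_le measurable_fst measurable_snd)).aemeasurable
    calc (∫⁻ t in Set.Ioi x, (∫⁻ v in Set.Ici t, ENNReal.ofReal v⁻¹ ∂μV) ∂volume)
        = ∫⁻ t in Set.Ioi x, (∫⁻ v,
            Set.indicator (Set.Ici t) (fun w => ENNReal.ofReal w⁻¹) v ∂μV) ∂volume := by
          refine lintegral_congr fun t => ?_
          rw [lintegral_indicator measurableSet_Ici]
      _ = ∫⁻ v, (∫⁻ t in Set.Ioi x,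
            Set.indicator (Set.Ici t) (fun w => ENNReal.ofReal w⁻¹) v ∂volume) ∂μV :=
          lintegral_lintegral_swap hfm
      _ = ∫⁻ v, ENNReal.ofReal v⁻¹ * ENNReal.ofReal (v - x) ∂μV := by
          refine lintegral_congr fun v => ?_
          have e3 : (fun t : ℝ => Set.indicator (Set.Ici t) (fun w => ENNReal.ofReal w⁻¹) v)
              = Set.indicator (Set.Iic v) (fun _ => ENNReal.ofReal v⁻¹) := by
            funext t
            by_cases h : t ≤ v <;> simp [Set.indicator, Set.mem_Ici, Set.mem_Iic, h]
          rw [e3, lintegral_indicator_const measurableSet_Iic,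
            Measure.restrict_apply measurableSet_Iic]
          have e4 : Set.Iic v ∩ Set.Ioi x = Set.Ioc x v := by
            ext t; simp [Set.mem_Ioc, and_comm]
          rw [e4, Real.volume_Ioc]
  rw [h1, h2, ← h3]
end

section
/- Let (ξ₁, ξ₂) be a pair of nonnegative real random variables belonging to the class 𝒦, with associated random variable V, and suppose the law of V is absolutely continuous with respect to Lebesgue measure on (0,∞) with density p. Then the joint law of (ξ₁, ξ₂) is absolutely continuous with respect to two-dimensional Lebesgue measure with density f(x,y) = p(x+y)/(x+y) for x > 0, y > 0 (and f(x,y) = 0 otherwise), i.e. P(ξ₁ ∈ dx, ξ₂ ∈ dy) = (p(x+y)/(x+y)) dx dy. -/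
open MeasureTheory ProbabilityTheory Set
open scoped ENNReal

noncomputable section

namespace Stmt2Aux

def T : ℝ × ℝ → ℝ × ℝ := fun q => (q.1 * q.2, (1 - q.1) * q.2)

def T' : ℝ × ℝ → (ℝ × ℝ →L[ℝ] ℝ × ℝ) := fun q =>
  LinearMap.toContinuousLinearMap (Matrix.toLin (Module.Basis.finTwoProd ℝ) (Module.Basis.finTwoProd ℝ)
    !![q.2, q.1; -q.2, 1 - q.1])

lemma hT : Measurable T :=
  (measurable_fst.mul measurable_snd).prodMk
    ((measurable_const.sub measurable_fst).mul measurable_snd)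

lemma hT'det (q : ℝ × ℝ) : (T' q).det = q.2 := by
  simp only [T', LinearMap.det_toContinuousLinearMap, LinearMap.det_toLin,
    Matrix.det_fin_two_of]
  ring

lemma hTderiv (q : ℝ × ℝ) : HasFDerivAt T (T' q) q := by
  have h1 : HasFDerivAt (fun y : ℝ × ℝ => y.1 * y.2)
      (q.1 • ContinuousLinearMap.snd ℝ ℝ ℝ + q.2 • ContinuousLinearMap.fst ℝ ℝ ℝ) q :=
    hasFDerivAt_fst.mul hasFDerivAt_snd
  have h2 : HasFDerivAt (fun y : ℝ × ℝ => (1 - y.1) * y.2)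
      ((1 - q.1) • ContinuousLinearMap.snd ℝ ℝ ℝ +
        q.2 • -(ContinuousLinearMap.fst ℝ ℝ ℝ)) q :=
    (hasFDerivAt_fst.const_sub 1).mul hasFDerivAt_snd
  refine (h1.prodMk h2).congr_fderiv ?_
  rw [T', Matrix.toLin_finTwoProd_toContinuousLinearMap]
  ext v <;> simp [ContinuousLinearMap.prod_apply] <;> ring

lemma hInj : InjOn T (Ioo (0:ℝ) 1 ×ˢ Ioi 0) := by
  rintro ⟨a, b⟩ ⟨ha, hb⟩ ⟨c, d⟩ ⟨hc, hd⟩ h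
  simp only [T, Prod.mk.injEq] at h
  obtain ⟨h1, h2⟩ := h
  have hbd : b = d := by nlinarith [h1, h2]
  subst hbd
  have hb0 : (b:ℝ) ≠ 0 := ne_of_gt hb
  exact Prod.ext (mul_right_cancel₀ hb0 h1) rfl

lemma hImg : T '' (Ioo (0:ℝ) 1 ×ˢ Ioi 0) = Ioi (0:ℝ) ×ˢ Ioi 0 := by
  ext ⟨x, y⟩
  simp only [mem_image, mem_prod, mem_Ioo, mem_Ioi, Prod.exists, T, Prod.mk.injEq]
  constructor
  · rintro ⟨a, b, ⟨⟨ha0, ha1⟩, hb⟩, hx, hy⟩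
    subst hx; subst hy
    exact ⟨mul_pos ha0 hb, mul_pos (by linarith) hb⟩
  · rintro ⟨hx, hy⟩
    refine ⟨x / (x + y), x + y, ⟨⟨by positivity, ?_⟩, by positivity⟩, ?_, ?_⟩
    · rw [div_lt_one (by positivity)]; linarith
    · exact div_mul_cancel₀ x (by positivity)
    · field_simp; ring

lemma prodWD (g : ℝ → ℝ≥0∞) (hg : Measurable g) [SigmaFinite (volume.withDensity g)] :
    (volume.restrict (Ioo (0:ℝ) 1)).prod (volume.withDensity g)
      = (volume : Measure (ℝ × ℝ)).withDensity
          (fun q => (Ioo (0:ℝ) 1).indicator 1 q.1 * g q.2) := by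
  refine Measure.prod_eq fun A B hA hB => ?_
  rw [withDensity_apply _ (hA.prod hB), Measure.volume_eq_prod, ← Measure.prod_restrict,
    lintegral_prod_mul ((measurable_one.indicator measurableSet_Ioo).aemeasurable)
      hg.aemeasurable, lintegral_indicator_one measurableSet_Ioo,
    Measure.restrict_apply measurableSet_Ioo, Set.inter_comm,
    Measure.restrict_apply hA, withDensity_apply _ hB]

lemma mapT (p : ℝ → ℝ) (hpm : Measurable p) (hp0 : ∀ v, 0 ≤ p v) :
    Measure.map T ((volume : Measure (ℝ × ℝ)).withDensity
        (fun q => (Ioo (0:ℝ) 1).indicator 1 q.1 *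
          (if 0 < q.2 then ENNReal.ofReal (p q.2) else 0)))
      = volume.withDensity (fun q : ℝ × ℝ =>
          if 0 < q.1 ∧ 0 < q.2 then ENNReal.ofReal (p (q.1 + q.2) / (q.1 + q.2))
          else 0) := by
  ext A hA
  rw [Measure.map_apply hT hA, withDensity_apply _ (hT hA), withDensity_apply _ hA]
  set s₀ : Set (ℝ × ℝ) := Ioo (0:ℝ) 1 ×ˢ Ioi 0 with hs₀
  have hs₀m : MeasurableSet s₀ := measurableSet_Ioo.prod measurableSet_Ioi
  set G : ℝ × ℝ → ℝ≥0∞ :=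
    fun x => A.indicator 1 x * ENNReal.ofReal (p (x.1 + x.2) / (x.1 + x.2)) with hG
  have key := lintegral_image_eq_lintegral_abs_det_fderiv_mul volume hs₀m
      (fun q _ => (hTderiv q).hasFDerivWithinAt) hInj G
  rw [hImg] at key
  have hR : (∫⁻ x in A, (if 0 < x.1 ∧ 0 < x.2 then
          ENNReal.ofReal (p (x.1 + x.2) / (x.1 + x.2)) else 0) ∂volume)
      = ∫⁻ x in Ioi (0:ℝ) ×ˢ Ioi 0, G x ∂volume := by
    rw [← lintegral_indicator hA, ← lintegral_indicator (measurableSet_Ioi.prod measurableSet_Ioi)]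
    congr 1; ext x
    simp only [Set.indicator_apply, hG, Set.mem_prod, Set.mem_Ioi]
    by_cases hxA : x ∈ A <;> by_cases h1 : 0 < x.1 <;> by_cases h2 : 0 < x.2 <;>
      simp [hxA, h1, h2]
  have hL : (∫⁻ q in T ⁻¹' A, (Ioo (0:ℝ) 1).indicator 1 q.1 *
          (if 0 < q.2 then ENNReal.ofReal (p q.2) else 0) ∂volume)
      = ∫⁻ q in s₀, (T ⁻¹' A).indicator 1 q * ENNReal.ofReal (p q.2) ∂volume := by
    rw [← lintegral_indicator (hT hA), ← lintegral_indicator hs₀m]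
    congr 1; ext q
    simp only [Set.indicator_apply, hs₀, Set.mem_prod, Set.mem_Ioo, Set.mem_Ioi,
      Set.mem_preimage]
    by_cases hqA : T q ∈ A <;> by_cases h1 : 0 < q.1 ∧ q.1 < 1 <;> by_cases h2 : 0 < q.2 <;>
      simp [hqA, h1, h2]
  have hMid : (∫⁻ q in s₀, ENNReal.ofReal |(T' q).det| * G (T q) ∂volume)
      = ∫⁻ q in s₀, (T ⁻¹' A).indicator 1 q * ENNReal.ofReal (p q.2) ∂volume := by
    refine setLIntegral_congr_fun_ae hs₀m (ae_of_all _ fun q hq => ?_)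
    obtain ⟨hq1, hq2⟩ := hq
    rw [Set.mem_Ioi] at hq2
    have hsum : q.1 * q.2 + (1 - q.1) * q.2 = q.2 := by ring
    have hind : A.indicator (1 : ℝ × ℝ → ℝ≥0∞) (q.1 * q.2, (1 - q.1) * q.2)
        = (T ⁻¹' A).indicator 1 q := by
      by_cases h : (q.1 * q.2, (1 - q.1) * q.2) ∈ A
      · rw [Set.indicator_of_mem h, Set.indicator_of_mem (by simp [T, Set.mem_preimage, h])]
        rfl
      · rw [Set.indicator_of_notMem h,
          Set.indicator_of_notMem (by simp [T, Set.mem_preimage, h])]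
    have hGT : G (T q) = (T ⁻¹' A).indicator 1 q * ENNReal.ofReal (p q.2 / q.2) := by
      rw [hG]
      simp only [T]
      rw [hsum, hind]
    rw [hT'det, abs_of_pos hq2, hGT, ← mul_assoc, mul_comm (ENNReal.ofReal q.2), mul_assoc,
      ← ENNReal.ofReal_mul hq2.le,
      show q.2 * (p q.2 / q.2) = p q.2 by field_simp]
  rw [hL, hR, key, hMid]

end Stmt2Aux

end

/-- If `(ξ₁, ξ₂)` belongs to the class `𝒦` with associated random
variable `V`, and the law of `V` is absolutely continuous with respect to
Lebesgue measure on `(0,∞)` with density `p`, then the joint law of `(ξ₁, ξ₂)`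
has density `(x,y) ↦ p(x+y)/(x+y)` for `x > 0, y > 0` (and `0` otherwise) with
respect to two-dimensional Lebesgue measure. -/
theorem stmt2 {Ω Ω' : Type*} [MeasurableSpace Ω] [MeasurableSpace Ω']
    (P : Measure Ω) [IsProbabilityMeasure P]
    (P' : Measure Ω') [IsProbabilityMeasure P']
    (ξ₁ ξ₂ : Ω → ℝ) (hξ₁m : Measurable ξ₁) (hξ₂m : Measurable ξ₂)
    (hξ₁0 : ∀ ω, 0 ≤ ξ₁ ω) (hξ₂0 : ∀ ω, 0 ≤ ξ₂ ω)
    (V s : Ω' → ℝ) (hVm : Measurable V) (hsm : Measurable s)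
    (hV0 : ∀ ω, 0 ≤ V ω)
    (hsUnif : P'.map s = volume.restrict (Set.Ioo (0:ℝ) 1))
    (hIndep : IndepFun V s P')
    (hlaw : P.map (fun ω => (ξ₁ ω, ξ₂ ω)) =
      P'.map (fun ω => (s ω * V ω, (1 - s ω) * V ω)))
    (p : ℝ → ℝ) (hpm : Measurable p) (hp0 : ∀ v, 0 ≤ p v)
    (hVlaw : P'.map V =
      volume.withDensity (fun v => if 0 < v then ENNReal.ofReal (p v) else 0)) :
    P.map (fun ω => (ξ₁ ω, ξ₂ ω)) =
      volume.withDensity (fun q : ℝ × ℝ =>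
        if 0 < q.1 ∧ 0 < q.2 then ENNReal.ofReal (p (q.1 + q.2) / (q.1 + q.2))
        else 0) := by
  have hgm : Measurable (fun v => if 0 < v then ENNReal.ofReal (p v) else 0) :=
    Measurable.ite measurableSet_Ioi hpm.ennreal_ofReal measurable_const
  have hprob : IsProbabilityMeasure (volume.withDensity
      (fun v => if 0 < v then ENNReal.ofReal (p v) else 0)) :=
    hVlaw ▸ Measure.isProbabilityMeasure_map hVm.aemeasurable
  rw [hlaw,
    show (fun ω => (s ω * V ω, (1 - s ω) * V ω)) = Stmt2Aux.T ∘ (fun ω => (s ω, V ω)) from rfl,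
    ← Measure.map_map Stmt2Aux.hT (hsm.prodMk hVm),
    (indepFun_iff_map_prod_eq_prod_map_map hsm.aemeasurable hVm.aemeasurable).1 hIndep.symm,
    hsUnif, hVlaw, Stmt2Aux.prodWD _ hgm, Stmt2Aux.mapT p hpm hp0]
end

section
/- Let ξ₁ and ξ₂ be nonnegative real random variables on a probability space. Then (ξ₁, ξ₂) belongs to the class 𝒦 if and only if for all positive real numbers α ≠ β, E[exp(−α ξ₁ − β ξ₂)] = (1/(α−β)) ∫_β^α E[exp(−γ (ξ₁+ξ₂))] dγ. -/
open MeasureTheory ProbabilityTheory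

lemma laplace_tendsto {ρ : Measure (ℝ × ℝ)} [IsProbabilityMeasure ρ]
    (hρ : ∀ᵐ p ∂ρ, 0 ≤ p.1 ∧ 0 ≤ p.2) (m n : ℝ) (hm : 0 ≤ m) (hn : 0 ≤ n) :
    Filter.Tendsto
      (fun k : ℕ => ∫ p, Real.exp (-(m + 1/(k+1)) * p.1 - (n + 1/(k+1)) * p.2) ∂ρ)
      Filter.atTop (nhds (∫ p, Real.exp (-m * p.1 - n * p.2) ∂ρ)) := by
  apply MeasureTheory.tendsto_integral_of_dominated_convergence (fun _ => (1:ℝ))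
  · intro k
    exact (Continuous.aestronglyMeasurable (by fun_prop))
  · exact integrable_const 1
  · intro k
    filter_upwards [hρ] with p hp
    rw [Real.norm_eq_abs, abs_of_pos (Real.exp_pos _)]
    calc Real.exp (-(m + 1/(k+1)) * p.1 - (n + 1/(k+1)) * p.2) ≤ Real.exp 0 := by
          apply Real.exp_le_exp.mpr
          have h1 : (0:ℝ) < 1/(k+1) := by positivity
          nlinarith [hp.1, hp.2]
      _ = 1 := Real.exp_zero
  · filter_upwards [hρ] with p hp
    have h0 : Filter.Tendsto (fun k : ℕ => 1/((k:ℝ)+1)) Filter.atTop (nhds 0) :=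
      tendsto_one_div_add_atTop_nhds_zero_nat
    have : Filter.Tendsto
        (fun k : ℕ => -(m + 1/((k:ℝ)+1)) * p.1 - (n + 1/((k:ℝ)+1)) * p.2)
        Filter.atTop (nhds (-m * p.1 - n * p.2)) := by
      have := ((h0.const_add m).neg.mul_const p.1).sub ((h0.const_add n).mul_const p.2)
      simpa using this
    exact (Real.continuous_exp.continuousAt.tendsto.comp this)

noncomputable section

/-- The compact box `[0,1] × [0,1]`. -/
def Kbox : Set (ℝ × ℝ) := (Set.Icc (0:ℝ) 1) ×ˢ (Set.Icc (0:ℝ) 1)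

lemma isCompact_Kbox : IsCompact Kbox := isCompact_Icc.prod isCompact_Icc

instance : CompactSpace Kbox := isCompact_iff_compactSpace.mp isCompact_Kbox

/-- clamp map into the box -/
def clampK (p : ℝ × ℝ) : Kbox :=
  ⟨(min (max p.1 0) 1, min (max p.2 0) 1),
    ⟨⟨le_min (le_max_right _ _) zero_le_one, min_le_right _ _⟩,
     ⟨le_min (le_max_right _ _) zero_le_one, min_le_right _ _⟩⟩⟩

lemma continuous_clampK : Continuous clampK :=
  Continuous.subtype_mk (by fun_prop) _

lemma clampK_eq {p : ℝ × ℝ} (hp : p ∈ Kbox) : (clampK p : ℝ × ℝ) = p := by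
  obtain ⟨⟨h1, h2⟩, ⟨h3, h4⟩⟩ := hp
  simp only [clampK]
  rw [max_eq_left h1, min_eq_left h2, max_eq_left h3, min_eq_left h4]

/-- first coordinate as a continuous map on the box -/
def pi1 : C(Kbox, ℝ) := ⟨fun q => (q : ℝ × ℝ).1, continuous_fst.comp continuous_subtype_val⟩
def pi2 : C(Kbox, ℝ) := ⟨fun q => (q : ℝ × ℝ).2, continuous_snd.comp continuous_subtype_val⟩

example (m n : ℕ) (x : Kbox) : (pi1 ^ m * pi2 ^ n) x = (x:ℝ×ℝ).1 ^ m * (x:ℝ×ℝ).2 ^ n := by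
  simp [pi1, pi2]

def monoSet : Set C(Kbox, ℝ) := {g | ∃ m n : ℕ, g = pi1 ^ m * pi2 ^ n}

def monoSpan : Submodule ℝ C(Kbox, ℝ) := Submodule.span ℝ monoSet

lemma one_mem_monoSpan : (1 : C(Kbox, ℝ)) ∈ monoSpan :=
  Submodule.subset_span ⟨0, 0, by simp⟩

lemma mul_mem_monoSpan : ∀ (x y : C(Kbox, ℝ)), x ∈ monoSpan → y ∈ monoSpan → x * y ∈ monoSpan := by
  intro x y hx hy
  induction hx using Submodule.span_induction with
  | mem g hg =>
    induction hy using Submodule.span_induction with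
    | mem g' hg' =>
      obtain ⟨m, n, rfl⟩ := hg
      obtain ⟨m', n', rfl⟩ := hg'
      exact Submodule.subset_span ⟨m + m', n + n', by ring⟩
    | zero => simpa using (Submodule.zero_mem _)
    | add a b _ _ ha hb => simpa [mul_add] using Submodule.add_mem _ ha hb
    | smul c a _ ha => simpa [mul_smul_comm] using Submodule.smul_mem _ c ha
  | zero => simpa using (Submodule.zero_mem _)
  | add a b _ _ ha hb => simpa [add_mul] using Submodule.add_mem _ ha hb
  | smul c a _ ha => simpa [smul_mul_assoc] using Submodule.smul_mem _ c ha

def monoAlg : Subalgebra ℝ C(Kbox, ℝ) := monoSpan.toSubalgebra one_mem_monoSpan mul_mem_monoSpan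

lemma monoAlg_separates : monoAlg.SeparatesPoints := by
  intro x y hxy
  have hne : (x : ℝ × ℝ) ≠ (y : ℝ × ℝ) := fun h => hxy (Subtype.ext h)
  have : ¬((x:ℝ×ℝ).1 = (y:ℝ×ℝ).1 ∧ (x:ℝ×ℝ).2 = (y:ℝ×ℝ).2) := by
    intro ⟨h1, h2⟩; exact hne (Prod.ext h1 h2)
  rcases not_and_or.mp this with h | h
  · exact ⟨pi1, ⟨pi1, Submodule.subset_span ⟨1, 0, by simp⟩, rfl⟩, h⟩
  · exact ⟨pi2, ⟨pi2, Submodule.subset_span ⟨0, 1, by simp⟩, rfl⟩, h⟩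

lemma integrable_comp_clampK (g : C(Kbox, ℝ)) (ρ : Measure (ℝ × ℝ)) [IsProbabilityMeasure ρ] :
    Integrable (fun p => g (clampK p)) ρ := by
  refine Integrable.mono' (integrable_const ‖g‖)
    ((g.continuous.comp continuous_clampK).aestronglyMeasurable) ?_
  exact Filter.Eventually.of_forall fun p => g.norm_coe_le_norm _

lemma span_integral_eq {μ ν : Measure (ℝ×ℝ)} [IsProbabilityMeasure μ] [IsProbabilityMeasure ν]
    (hμ : ∀ᵐ p ∂μ, p ∈ Kbox) (hν : ∀ᵐ p ∂ν, p ∈ Kbox)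
    (h : ∀ m n : ℕ, ∫ p, p.1^m * p.2^n ∂μ = ∫ p, p.1^m * p.2^n ∂ν)
    {g : C(Kbox,ℝ)} (hg : g ∈ monoSpan) :
    ∫ p, g (clampK p) ∂μ = ∫ p, g (clampK p) ∂ν := by
  induction hg using Submodule.span_induction with
  | mem g hg =>
    obtain ⟨m, n, rfl⟩ := hg
    have e1 : ∫ p, (pi1^m*pi2^n) (clampK p) ∂μ = ∫ p, p.1^m * p.2^n ∂μ := by
      apply integral_congr_ae; filter_upwards [hμ] with p hp
      simp [pi1, pi2, clampK_eq hp]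
    have e2 : ∫ p, (pi1^m*pi2^n) (clampK p) ∂ν = ∫ p, p.1^m * p.2^n ∂ν := by
      apply integral_congr_ae; filter_upwards [hν] with p hp
      simp [pi1, pi2, clampK_eq hp]
    rw [e1, e2, h]
  | zero => simp
  | add a b ha' hb' ha hb =>
    simp only [ContinuousMap.add_apply]
    rw [integral_add (integrable_comp_clampK a μ) (integrable_comp_clampK b μ),
      integral_add (integrable_comp_clampK a ν) (integrable_comp_clampK b ν), ha, hb]
  | smul c a ha' ha =>
    simp only [ContinuousMap.smul_apply, smul_eq_mul]
    rw [integral_const_mul, integral_const_mul, ha]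

/-- Two probability measures concentrated on the box with equal monomial moments agree on
integrals of bounded continuous functions. -/
lemma integral_eq_of_moments {μ ν : Measure (ℝ×ℝ)} [IsProbabilityMeasure μ] [IsProbabilityMeasure ν]
    (hμ : ∀ᵐ p ∂μ, p ∈ Kbox) (hν : ∀ᵐ p ∂ν, p ∈ Kbox)
    (h : ∀ m n : ℕ, ∫ p, p.1^m * p.2^n ∂μ = ∫ p, p.1^m * p.2^n ∂ν)
    (F : ℝ × ℝ → ℝ) (hF : Continuous F) :
    ∫ p, F p ∂μ = ∫ p, F p ∂ν := by
  set G : C(Kbox, ℝ) := ⟨fun q => F q, hF.comp continuous_subtype_val⟩ with hG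
  have eμ : ∫ p, F p ∂μ = ∫ p, G (clampK p) ∂μ := by
    apply integral_congr_ae; filter_upwards [hμ] with p hp
    simp [hG, clampK_eq hp]
  have eν : ∫ p, F p ∂ν = ∫ p, G (clampK p) ∂ν := by
    apply integral_congr_ae; filter_upwards [hν] with p hp
    simp [hG, clampK_eq hp]
  rw [eμ, eν]
  have key : ∀ ε : ℝ, 0 < ε →
      |∫ p, G (clampK p) ∂μ - ∫ p, G (clampK p) ∂ν| ≤ 2 * ε := by
    intro ε hε
    obtain ⟨g, hg⟩ :=
      ContinuousMap.exists_mem_subalgebra_near_continuousMap_of_separatesPoints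
        monoAlg monoAlg_separates G ε hε
    have hgM : (g : C(Kbox, ℝ)) ∈ monoSpan := g.2
    have hgi := span_integral_eq hμ hν h hgM
    have bound : ∀ (ρ : Measure (ℝ×ℝ)) [IsProbabilityMeasure ρ],
        |∫ p, G (clampK p) ∂ρ - ∫ p, (g : C(Kbox,ℝ)) (clampK p) ∂ρ| ≤ ε := by
      intro ρ _
      rw [← integral_sub (integrable_comp_clampK G ρ) (integrable_comp_clampK _ ρ)]
      have : ∀ p : ℝ × ℝ, ‖G (clampK p) - (g : C(Kbox,ℝ)) (clampK p)‖ ≤ ε := by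
        intro p
        have := ContinuousMap.norm_coe_le_norm ((g : C(Kbox,ℝ)) - G) (clampK p)
        simp only [ContinuousMap.coe_sub, Pi.sub_apply] at this
        rw [Real.norm_eq_abs, abs_sub_comm]
        calc |(g : C(Kbox,ℝ)) (clampK p) - G (clampK p)| ≤ ‖(g : C(Kbox,ℝ)) - G‖ := by
              rw [← Real.norm_eq_abs]; exact this
          _ ≤ ε := le_of_lt hg
      calc |∫ p, (G (clampK p) - (g : C(Kbox,ℝ)) (clampK p)) ∂ρ|
          ≤ ε * (ρ Set.univ).toReal := by
            rw [← Real.norm_eq_abs]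
            apply norm_integral_le_of_norm_le_const
            exact Filter.Eventually.of_forall this
        _ = ε := by simp
    calc |∫ p, G (clampK p) ∂μ - ∫ p, G (clampK p) ∂ν|
        ≤ |∫ p, G (clampK p) ∂μ - ∫ p, (g:C(Kbox,ℝ)) (clampK p) ∂μ|
          + |∫ p, (g:C(Kbox,ℝ)) (clampK p) ∂ν - ∫ p, G (clampK p) ∂ν| := by
          rw [hgi]; exact abs_sub_le _ _ _ |>.trans (le_of_eq rfl)
      _ ≤ ε + ε := add_le_add (bound μ) (by rw [abs_sub_comm]; exact bound ν)
      _ = 2 * ε := by ring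
  by_contra hne
  have habs : 0 < |∫ p, G (clampK p) ∂μ - ∫ p, G (clampK p) ∂ν| := by
    rw [abs_pos, sub_ne_zero]; exact hne
  have := key (|∫ p, G (clampK p) ∂μ - ∫ p, G (clampK p) ∂ν| / 4) (by positivity)
  linarith

lemma measure_eq_of_moments {μ ν : Measure (ℝ×ℝ)} [IsProbabilityMeasure μ] [IsProbabilityMeasure ν]
    (hμ : ∀ᵐ p ∂μ, p ∈ Kbox) (hν : ∀ᵐ p ∂ν, p ∈ Kbox)
    (h : ∀ m n : ℕ, ∫ p, p.1^m * p.2^n ∂μ = ∫ p, p.1^m * p.2^n ∂ν) : μ = ν := by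
  apply ext_of_forall_lintegral_eq_of_IsFiniteMeasure
  intro f
  have hfiμ := BoundedContinuousFunction.integrable_of_nnreal μ f
  have hfiν := BoundedContinuousFunction.integrable_of_nnreal ν f
  rw [lintegral_coe_eq_integral _ hfiμ, lintegral_coe_eq_integral _ hfiν]
  congr 1
  exact integral_eq_of_moments hμ hν h _ (NNReal.continuous_coe.comp f.continuous)

/-- 2D Laplace-transform (at natural-number points) uniqueness for probability measures
concentrated on the nonnegative quadrant. -/
lemma laplace_unique {μ ν : Measure (ℝ × ℝ)} [IsProbabilityMeasure μ] [IsProbabilityMeasure ν]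
    (hμ : ∀ᵐ p ∂μ, 0 ≤ p.1 ∧ 0 ≤ p.2) (hν : ∀ᵐ p ∂ν, 0 ≤ p.1 ∧ 0 ≤ p.2)
    (h : ∀ m n : ℕ, ∫ p, Real.exp (-(m:ℝ) * p.1 - (n:ℝ) * p.2) ∂μ
        = ∫ p, Real.exp (-(m:ℝ) * p.1 - (n:ℝ) * p.2) ∂ν) : μ = ν := by
  set ψ : ℝ × ℝ → ℝ × ℝ := fun p => (Real.exp (-p.1), Real.exp (-p.2)) with hψ
  have hψc : Continuous ψ := by fun_prop
  have hψm : Measurable ψ := hψc.measurable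
  have hψinj : Function.Injective ψ := by
    intro p q hpq
    rw [Prod.mk.injEq] at hpq
    exact Prod.ext (neg_injective (Real.exp_injective hpq.1))
      (neg_injective (Real.exp_injective hpq.2))
  have hemb : MeasurableEmbedding ψ := hψm.measurableEmbedding hψinj
  haveI : IsProbabilityMeasure (μ.map ψ) := Measure.isProbabilityMeasure_map hψm.aemeasurable
  haveI : IsProbabilityMeasure (ν.map ψ) := Measure.isProbabilityMeasure_map hψm.aemeasurable
  have hbox : ∀ (ρ : Measure (ℝ×ℝ)), (∀ᵐ p ∂ρ, 0 ≤ p.1 ∧ 0 ≤ p.2) →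
      ∀ᵐ q ∂(ρ.map ψ), q ∈ Kbox := by
    intro ρ hρ
    rw [ae_map_iff hψm.aemeasurable (by
      have : MeasurableSet Kbox := (measurableSet_Icc).prod measurableSet_Icc
      exact this)]
    filter_upwards [hρ] with p hp
    refine ⟨⟨(Real.exp_pos _).le, Real.exp_le_one_iff.mpr (by linarith [hp.1])⟩,
      ⟨(Real.exp_pos _).le, Real.exp_le_one_iff.mpr (by linarith [hp.2])⟩⟩
  have hmom : ∀ (ρ : Measure (ℝ×ℝ)), IsProbabilityMeasure ρ → ∀ m n : ℕ,
      ∫ q, q.1^m * q.2^n ∂(ρ.map ψ) = ∫ p, Real.exp (-(m:ℝ) * p.1 - (n:ℝ) * p.2) ∂ρ := by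
    intro ρ _ m n
    rw [integral_map hψm.aemeasurable (Continuous.aestronglyMeasurable (by fun_prop))]
    congr 1; funext p
    rw [← Real.exp_nat_mul, ← Real.exp_nat_mul, ← Real.exp_add]
    ring_nf
  have hmapeq : μ.map ψ = ν.map ψ := by
    apply measure_eq_of_moments (hbox μ hμ) (hbox ν hν)
    intro m n
    rw [hmom μ inferInstance, hmom ν inferInstance, h]
  ext s hs
  have h1 : μ.map ψ (ψ '' s) = μ s := by
    rw [Measure.map_apply hψm (hemb.measurableSet_image.2 hs),
      Function.Injective.preimage_image hψinj]
  have h2 : ν.map ψ (ψ '' s) = ν s := by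
    rw [Measure.map_apply hψm (hemb.measurableSet_image.2 hs),
      Function.Injective.preimage_image hψinj]
  rw [← h1, ← h2, hmapeq]

/-- Fubini swap for the kernel `exp(-γx)` over `Ioc a b` with `0 < a`. -/
lemma swap_Ioc {ρ : Measure ℝ} [IsProbabilityMeasure ρ] (hρ0 : ∀ᵐ x ∂ρ, 0 ≤ x)
    {a b : ℝ} (ha : 0 < a) :
    ∫ x, (∫ γ in Set.Ioc a b, Real.exp (-γ*x)) ∂ρ
      = ∫ γ in Set.Ioc a b, (∫ x, Real.exp (-γ*x) ∂ρ) := by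
  set ν := volume.restrict (Set.Ioc a b) with hν
  haveI : IsFiniteMeasure ν := by
    constructor
    rw [hν, Measure.restrict_apply_univ, Real.volume_Ioc]
    exact ENNReal.ofReal_lt_top
  have hae : ∀ᵐ q ∂(ρ.prod ν), 0 ≤ q.1 ∧ q.2 ∈ Set.Ioc a b := by
    rw [ae_iff]
    have hAm : MeasurableSet (Set.Ici (0:ℝ) ×ˢ Set.Ioc a b) :=
      measurableSet_Ici.prod measurableSet_Ioc
    have hset : {q : ℝ × ℝ | ¬(0 ≤ q.1 ∧ q.2 ∈ Set.Ioc a b)}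
        = (Set.Ici (0:ℝ) ×ˢ Set.Ioc a b)ᶜ := rfl
    rw [hset, measure_compl hAm (measure_ne_top _ _)]
    have h1 : ρ (Set.Ici (0:ℝ)) = 1 := by
      rw [← prob_compl_eq_zero_iff measurableSet_Ici]
      rw [ae_iff] at hρ0
      convert hρ0 using 2
      ext x; simp
    have h2 : ν (Set.Ioc a b) = ν Set.univ := by
      rw [hν, Measure.restrict_apply measurableSet_Ioc, Measure.restrict_apply_univ,
        Set.inter_self]
    rw [Measure.prod_prod, h1, one_mul, h2, ← Set.univ_prod_univ, Measure.prod_prod,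
      measure_univ, one_mul, tsub_self]
  apply integral_integral_swap
  apply Integrable.mono' (integrable_const (1:ℝ))
  · exact Continuous.aestronglyMeasurable (by fun_prop)
  · filter_upwards [hae] with q hq
    rw [Function.uncurry, Real.norm_eq_abs, abs_of_pos (Real.exp_pos _)]
    calc Real.exp (-q.2 * q.1) ≤ Real.exp 0 := by
          apply Real.exp_le_exp.mpr
          have : 0 < q.2 := lt_trans ha hq.2.1
          nlinarith [hq.1]
      _ = 1 := Real.exp_zero

lemma swap_interval {ρ : Measure ℝ} [IsProbabilityMeasure ρ] (hρ0 : ∀ᵐ x ∂ρ, 0 ≤ x)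
    {α β : ℝ} (hα : 0 < α) (hβ : 0 < β) :
    ∫ x, (∫ γ in β..α, Real.exp (-γ*x)) ∂ρ
      = ∫ γ in β..α, (∫ x, Real.exp (-γ*x) ∂ρ) := by
  rcases le_total β α with hba | hab
  · simp only [intervalIntegral.integral_of_le hba]
    exact swap_Ioc hρ0 hβ
  · rw [intervalIntegral.integral_symm α β]
    simp only [intervalIntegral.integral_symm α β, intervalIntegral.integral_of_le hab]
    rw [integral_neg]
    rw [swap_Ioc hρ0 hα]

lemma prod_ae {ρ ν : Measure ℝ} [IsProbabilityMeasure ρ] [IsFiniteMeasure ν] {A B : Set ℝ}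
    (hA : MeasurableSet A) (hB : MeasurableSet B) (h1 : ρ A = 1) (h2 : ν B = ν Set.univ) :
    ∀ᵐ q ∂(ρ.prod ν), q.1 ∈ A ∧ q.2 ∈ B := by
  rw [ae_iff]
  have hset : {q : ℝ × ℝ | ¬(q.1 ∈ A ∧ q.2 ∈ B)} = (A ×ˢ B)ᶜ := rfl
  rw [hset, measure_compl (hA.prod hB) (measure_ne_top _ _), Measure.prod_prod, h1, one_mul,
    h2, ← Set.univ_prod_univ, Measure.prod_prod, measure_univ, one_mul, tsub_self]

set_option maxHeartbeats 1000000 in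
lemma lemA {Ω' : Type*} [MeasurableSpace Ω'] (Q : Measure Ω') [IsProbabilityMeasure Q]
    (V s : Ω' → ℝ) (hV : Measurable V) (hs : Measurable s) (hV0 : ∀ ω, 0 ≤ V ω)
    (hsU : Q.map s = volume.restrict (Set.Ioo (0:ℝ) 1))
    (hind : IndepFun V s Q) {α β : ℝ} (hα : 0 < α) (hβ : 0 < β) (hαβ : α ≠ β) :
    ∫ ω, Real.exp (-α * (s ω * V ω) - β * ((1 - s ω) * V ω)) ∂Q
      = (α - β)⁻¹ * ∫ γ in β..α, ∫ ω, Real.exp (-γ * V ω) ∂Q := by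
  set u := volume.restrict (Set.Ioo (0:ℝ) 1) with hu
  haveI : IsProbabilityMeasure u :=
    ⟨by rw [hu, Measure.restrict_apply_univ, Real.volume_Ioo]; norm_num⟩
  set ρ := Q.map V with hρ
  haveI : IsProbabilityMeasure ρ := Measure.isProbabilityMeasure_map hV.aemeasurable
  have hρ0 : ∀ᵐ x ∂ρ, 0 ≤ x := by
    rw [hρ, ae_map_iff hV.aemeasurable measurableSet_Ici]
    exact Filter.Eventually.of_forall hV0
  have hjoint : Q.map (fun ω => (V ω, s ω)) = ρ.prod u := by
    rw [hρ, ← hsU]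
    exact (indepFun_iff_map_prod_eq_prod_map_map hV.aemeasurable hs.aemeasurable).mp hind
  have hρ1 : ρ (Set.Ici (0:ℝ)) = 1 := by
    rw [← prob_compl_eq_zero_iff (measurableSet_Ici (a := (0:ℝ)))]
    rw [ae_iff] at hρ0
    convert hρ0 using 2
    ext x; simp
  have hu2 : u (Set.Ioo (0:ℝ) 1) = u Set.univ := by
    rw [hu, Measure.restrict_apply measurableSet_Ioo, Measure.restrict_apply_univ,
      Set.inter_self]
  have hae : ∀ᵐ q ∂(ρ.prod u), q.1 ∈ Set.Ici (0:ℝ) ∧ q.2 ∈ Set.Ioo (0:ℝ) 1 :=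
    prod_ae measurableSet_Ici measurableSet_Ioo hρ1 hu2
  have hGint : Integrable
      (fun q : ℝ × ℝ => Real.exp (-α * (q.2 * q.1) - β * ((1 - q.2) * q.1))) (ρ.prod u) := by
    apply Integrable.mono' (integrable_const (1:ℝ))
    · exact Continuous.aestronglyMeasurable (by fun_prop)
    · filter_upwards [hae] with q hq
      rw [Real.norm_eq_abs, abs_of_pos (Real.exp_pos _)]
      calc Real.exp (-α * (q.2 * q.1) - β * ((1 - q.2) * q.1)) ≤ Real.exp 0 := by
            apply Real.exp_le_exp.mpr
            obtain ⟨hq1, hq2, hq3⟩ := hq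
            have h1 : 0 ≤ q.1 := hq1
            nlinarith [mul_nonneg hα.le (mul_nonneg hq2.le h1),
              mul_nonneg hβ.le (mul_nonneg (by linarith : (0:ℝ) ≤ 1 - q.2) h1)]
        _ = 1 := Real.exp_zero
  have step1 : ∫ ω, Real.exp (-α * (s ω * V ω) - β * ((1 - s ω) * V ω)) ∂Q
      = ∫ q : ℝ × ℝ, Real.exp (-α * (q.2 * q.1) - β * ((1 - q.2) * q.1)) ∂(ρ.prod u) := by
    rw [← hjoint, integral_map (hV.prodMk hs).aemeasurable
      (Continuous.aestronglyMeasurable (by fun_prop))]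
  have step3 : ∀ x : ℝ, (∫ t, Real.exp (-α * (t * x) - β * ((1 - t) * x)) ∂u)
      = (α - β)⁻¹ * ∫ γ in β..α, Real.exp (-γ*x) := by
    intro x
    have efun : ∀ t : ℝ, Real.exp (-α * (t * x) - β * ((1 - t) * x))
        = Real.exp (-((α-β)*t + β)*x) := fun t => by congr 1; ring
    simp only [efun, hu]
    rw [show (∫ t in Set.Ioo (0:ℝ) 1, Real.exp (-((α-β)*t + β)*x))
        = ∫ t in (0:ℝ)..1, Real.exp (-((α-β)*t + β)*x) by
      rw [intervalIntegral.integral_of_le zero_le_one, integral_Ioc_eq_integral_Ioo]]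
    have e1 := intervalIntegral.integral_comp_mul_add
      (f := fun γ => Real.exp (-γ*x)) (a := (0:ℝ)) (b := 1) (sub_ne_zero.mpr hαβ) β
    rw [e1, show (α-β)*0+β = β by ring, show (α-β)*1+β = α by ring, smul_eq_mul]
  have step5 : ∀ γ : ℝ, (∫ x, Real.exp (-γ*x) ∂ρ) = ∫ ω, Real.exp (-γ * V ω) ∂Q := by
    intro γ
    rw [hρ, integral_map hV.aemeasurable (Continuous.aestronglyMeasurable (by fun_prop))]
  rw [step1, integral_prod _ hGint]
  simp only [step3]
  rw [integral_const_mul, swap_interval hρ0 hα hβ]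
  congr 1
  apply intervalIntegral.integral_congr
  intro γ _
  exact step5 γ

end

open MeasureTheory ProbabilityTheory

def MemK {Ω : Type*} [MeasurableSpace Ω] (P : Measure Ω) (ξ₁ ξ₂ : Ω → ℝ) : Prop :=
  ∃ (Ω' : Type) (instΩ' : MeasurableSpace Ω') (P' : Measure Ω') (V s : Ω' → ℝ),
    IsProbabilityMeasure P' ∧ Measurable V ∧ Measurable s ∧ (∀ ω, 0 ≤ V ω) ∧
    P'.map s = volume.restrict (Set.Ioo (0:ℝ) 1) ∧
    IndepFun V s P' ∧
    P.map (fun ω => (ξ₁ ω, ξ₂ ω)) =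
      P'.map (fun ω => (s ω * V ω, (1 - s ω) * V ω))

set_option maxHeartbeats 2000000 in
/-- nonnegative random variables `ξ₁, ξ₂` form a pair in the class
`𝒦` if and only if for all positive `α ≠ β`,
`E[exp(-α ξ₁ - β ξ₂)] = (1/(α-β)) ∫_β^α E[exp(-γ (ξ₁+ξ₂))] dγ`. -/
theorem stmt3 {Ω : Type*} [MeasurableSpace Ω]
    (P : Measure Ω) [IsProbabilityMeasure P]
    (ξ₁ ξ₂ : Ω → ℝ) (hξ₁m : Measurable ξ₁) (hξ₂m : Measurable ξ₂)
    (hξ₁0 : ∀ ω, 0 ≤ ξ₁ ω) (hξ₂0 : ∀ ω, 0 ≤ ξ₂ ω) :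
    MemK P ξ₁ ξ₂ ↔
      ∀ α β : ℝ, 0 < α → 0 < β → α ≠ β →
        ∫ ω, Real.exp (-α * ξ₁ ω - β * ξ₂ ω) ∂P =
          (α - β)⁻¹ *
            ∫ γ in β..α, (∫ ω, Real.exp (-γ * (ξ₁ ω + ξ₂ ω)) ∂P) := by
  have hpair : AEMeasurable (fun ω => (ξ₁ ω, ξ₂ ω)) P := (hξ₁m.prodMk hξ₂m).aemeasurable
  constructor
  · rintro ⟨Ω', mΩ', P', V, s, hP', hVm, hsm, hV0, hsU, hind, hlaw⟩ α β hα hβ hαβ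
    haveI := hP'
    have hpair' : AEMeasurable (fun ω => (s ω * V ω, (1 - s ω) * V ω)) P' :=
      ((hsm.mul hVm).prodMk ((measurable_const.sub hsm).mul hVm)).aemeasurable
    have eL : ∫ ω, Real.exp (-α * ξ₁ ω - β * ξ₂ ω) ∂P
        = ∫ ω, Real.exp (-α * (s ω * V ω) - β * ((1 - s ω) * V ω)) ∂P' := by
      have i1 : ∫ q : ℝ × ℝ, Real.exp (-α * q.1 - β * q.2) ∂(P.map (fun ω => (ξ₁ ω, ξ₂ ω)))
          = ∫ ω, Real.exp (-α * ξ₁ ω - β * ξ₂ ω) ∂P :=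
        integral_map hpair (Continuous.aestronglyMeasurable (by fun_prop))
      have i2 : ∫ q : ℝ × ℝ, Real.exp (-α * q.1 - β * q.2)
            ∂(P'.map (fun ω => (s ω * V ω, (1 - s ω) * V ω)))
          = ∫ ω, Real.exp (-α * (s ω * V ω) - β * ((1 - s ω) * V ω)) ∂P' :=
        integral_map hpair' (Continuous.aestronglyMeasurable (by fun_prop))
      rw [← i1, hlaw, i2]
    have eR : ∀ γ : ℝ, ∫ ω, Real.exp (-γ * (ξ₁ ω + ξ₂ ω)) ∂P
        = ∫ ω, Real.exp (-γ * V ω) ∂P' := by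
      intro γ
      have i1 : ∫ q : ℝ × ℝ, Real.exp (-γ * (q.1 + q.2)) ∂(P.map (fun ω => (ξ₁ ω, ξ₂ ω)))
          = ∫ ω, Real.exp (-γ * (ξ₁ ω + ξ₂ ω)) ∂P :=
        integral_map hpair (Continuous.aestronglyMeasurable (by fun_prop))
      have i2 : ∫ q : ℝ × ℝ, Real.exp (-γ * (q.1 + q.2))
            ∂(P'.map (fun ω => (s ω * V ω, (1 - s ω) * V ω)))
          = ∫ ω, Real.exp (-γ * (s ω * V ω + (1 - s ω) * V ω)) ∂P' :=
        integral_map hpair' (Continuous.aestronglyMeasurable (by fun_prop))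
      rw [← i1, hlaw, i2]
      apply integral_congr_ae
      refine Filter.Eventually.of_forall fun ω => ?_
      exact congrArg Real.exp (by ring)
    rw [eL, lemA P' V s hVm hsm hV0 hsU hind hα hβ hαβ]
    congr 1
    exact intervalIntegral.integral_congr fun γ _ => (eR γ).symm
  · intro h
    set μ0 : Measure ℝ := P.map (fun ω => ξ₁ ω + ξ₂ ω) with hμ0
    haveI : IsProbabilityMeasure μ0 := Measure.isProbabilityMeasure_map (hξ₁m.add hξ₂m).aemeasurable
    set u := volume.restrict (Set.Ioo (0:ℝ) 1) with hu
    haveI : IsProbabilityMeasure u :=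
      ⟨by rw [hu, Measure.restrict_apply_univ, Real.volume_Ioo]; norm_num⟩
    set V : ℝ × ℝ → ℝ := fun p => max p.1 0 with hV
    have hVm : Measurable V := measurable_fst.max measurable_const
    have hμ00 : ∀ᵐ x ∂μ0, 0 ≤ x := by
      rw [hμ0, ae_map_iff (show Measurable (fun ω => ξ₁ ω + ξ₂ ω) from hξ₁m.add hξ₂m).aemeasurable measurableSet_Ici]
      exact Filter.Eventually.of_forall fun ω => add_nonneg (hξ₁0 ω) (hξ₂0 ω)
    have hu2 : u (Set.Ioo (0:ℝ) 1) = u Set.univ := by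
      rw [hu, Measure.restrict_apply measurableSet_Ioo, Measure.restrict_apply_univ,
        Set.inter_self]
    have haeprod : ∀ᵐ q ∂(μ0.prod u), q.1 ∈ Set.Ici (0:ℝ) ∧ q.2 ∈ Set.Ioo (0:ℝ) 1 := by
      apply prod_ae measurableSet_Ici measurableSet_Ioo _ hu2
      rw [← prob_compl_eq_zero_iff (measurableSet_Ici (a := (0:ℝ)))]
      rw [ae_iff] at hμ00
      convert hμ00 using 2
      ext x; simp
    have hVeq : ∀ᵐ q ∂(μ0.prod u), V q = q.1 := by
      filter_upwards [haeprod] with q hq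
      exact max_eq_left hq.1
    have hsU : (μ0.prod u).map Prod.snd = volume.restrict (Set.Ioo (0:ℝ) 1) := by
      rw [Measure.map_snd_prod, measure_univ, one_smul]
    have hind : IndepFun V Prod.snd (μ0.prod u) := by
      rw [indepFun_iff_map_prod_eq_prod_map_map hVm.aemeasurable measurable_snd.aemeasurable]
      have hmax : Measurable (fun x : ℝ => max x 0) := measurable_id.max measurable_const
      have h1 : (μ0.prod u).map (fun q : ℝ × ℝ => (V q, q.2))
          = (μ0.map (fun x => max x 0)).prod (u.map id) := by
        rw [Measure.map_prod_map _ _ hmax measurable_id]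
        rfl
      have h2 : (μ0.prod u).map V = μ0.map (fun x => max x 0) := by
        rw [show V = (fun x => max x 0) ∘ Prod.fst from rfl,
          ← Measure.map_map hmax measurable_fst,
          Measure.map_fst_prod, measure_univ, one_smul]
      rw [h1, h2, hsU, Measure.map_id, hu]
    -- the transported value of ∫ exp (-γ V) over the product measure
    have hVlap : ∀ γ : ℝ, ∫ q, Real.exp (-γ * V q) ∂(μ0.prod u)
        = ∫ ω, Real.exp (-γ * (ξ₁ ω + ξ₂ ω)) ∂P := by
      intro γ
      have e1 : ∫ q, Real.exp (-γ * V q) ∂(μ0.prod u)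
          = ∫ q, Real.exp (-γ * q.1) ∂(μ0.prod u) := by
        apply integral_congr_ae
        filter_upwards [hVeq] with q hq
        rw [hq]
      have e2 : ∫ q, Real.exp (-γ * q.1) ∂(μ0.prod u) = ∫ x, Real.exp (-γ * x) ∂μ0 := by
        have i1 : ∫ x, Real.exp (-γ * x) ∂((μ0.prod u).map Prod.fst)
            = ∫ q : ℝ × ℝ, Real.exp (-γ * q.1) ∂(μ0.prod u) :=
          integral_map measurable_fst.aemeasurable
            (Continuous.aestronglyMeasurable (by fun_prop))
        rw [← i1, Measure.map_fst_prod, measure_univ, one_smul]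
      have e3 : ∫ x, Real.exp (-γ * x) ∂μ0 = ∫ ω, Real.exp (-γ * (ξ₁ ω + ξ₂ ω)) ∂P := by
        rw [hμ0, integral_map (show Measurable (fun ω => ξ₁ ω + ξ₂ ω) from hξ₁m.add hξ₂m).aemeasurable
          (Continuous.aestronglyMeasurable (by fun_prop))]
      rw [e1, e2, e3]
    have hpair' : AEMeasurable (fun q : ℝ × ℝ => (q.2 * V q, (1 - q.2) * V q)) (μ0.prod u) :=
      ((measurable_snd.mul hVm).prodMk
        ((measurable_const.sub measurable_snd).mul hVm)).aemeasurable
    -- equality of two-dimensional Laplace transforms at all positive points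
    have hpos : ∀ a b : ℝ, 0 < a → 0 < b →
        ∫ ω, Real.exp (-a * ξ₁ ω - b * ξ₂ ω) ∂P
          = ∫ q, Real.exp (-a * (q.2 * V q) - b * ((1 - q.2) * V q)) ∂(μ0.prod u) := by
      intro a b ha hb
      rcases eq_or_ne a b with rfl | hab
      · have e1 : ∫ q, Real.exp (-a * (q.2 * V q) - a * ((1 - q.2) * V q)) ∂(μ0.prod u)
            = ∫ q, Real.exp (-a * V q) ∂(μ0.prod u) := by
          apply integral_congr_ae
          refine Filter.Eventually.of_forall fun q => ?_
          exact congrArg Real.exp (by ring)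
        have e2 : ∫ ω, Real.exp (-a * ξ₁ ω - a * ξ₂ ω) ∂P
            = ∫ ω, Real.exp (-a * (ξ₁ ω + ξ₂ ω)) ∂P := by
          apply integral_congr_ae
          refine Filter.Eventually.of_forall fun ω => ?_
          exact congrArg Real.exp (by ring)
        rw [e1, e2, hVlap]
      · rw [lemA (μ0.prod u) V Prod.snd hVm measurable_snd
          (fun q => le_max_right _ _) hsU hind ha hb hab, h a b ha hb hab]
        congr 1
        exact intervalIntegral.integral_congr fun γ _ => (hVlap γ).symm
    -- conclude equality of joint laws via Laplace uniqueness
    refine ⟨ℝ × ℝ, inferInstance, μ0.prod u, V, Prod.snd, inferInstance, hVm, measurable_snd,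
      fun q => le_max_right _ _, hsU, hind, ?_⟩
    haveI : IsProbabilityMeasure (P.map (fun ω => (ξ₁ ω, ξ₂ ω))) :=
      Measure.isProbabilityMeasure_map hpair
    haveI : IsProbabilityMeasure
        ((μ0.prod u).map (fun q : ℝ × ℝ => (q.2 * V q, (1 - q.2) * V q))) :=
      Measure.isProbabilityMeasure_map hpair'
    have hsetm : MeasurableSet {p : ℝ × ℝ | 0 ≤ p.1 ∧ 0 ≤ p.2} :=
      (measurable_fst measurableSet_Ici).inter (measurable_snd measurableSet_Ici)
    apply laplace_unique
    · rw [ae_map_iff hpair hsetm]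
      exact Filter.Eventually.of_forall fun ω => ⟨hξ₁0 ω, hξ₂0 ω⟩
    · rw [ae_map_iff hpair' hsetm]
      filter_upwards [haeprod] with q hq
      have h1 : 0 ≤ V q := le_max_right _ _
      have h2 : 0 ≤ q.2 := le_of_lt hq.2.1
      have h3 : 0 ≤ 1 - q.2 := by have := hq.2.2; linarith
      exact ⟨mul_nonneg h2 h1, mul_nonneg h3 h1⟩
    · intro m n
      have hμlap : ∀ a b : ℝ,
          ∫ p, Real.exp (-a * p.1 - b * p.2) ∂(P.map (fun ω => (ξ₁ ω, ξ₂ ω)))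
            = ∫ ω, Real.exp (-a * ξ₁ ω - b * ξ₂ ω) ∂P := fun a b => by
        rw [integral_map hpair (Continuous.aestronglyMeasurable (by fun_prop))]
      have hνlap : ∀ a b : ℝ,
          ∫ p, Real.exp (-a * p.1 - b * p.2)
              ∂((μ0.prod u).map (fun q : ℝ × ℝ => (q.2 * V q, (1 - q.2) * V q)))
            = ∫ q, Real.exp (-a * (q.2 * V q) - b * ((1 - q.2) * V q)) ∂(μ0.prod u) :=
        fun a b => by
          rw [integral_map hpair' (Continuous.aestronglyMeasurable (by fun_prop))]
      have t1 := laplace_tendsto (ρ := P.map (fun ω => (ξ₁ ω, ξ₂ ω)))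
        (by rw [ae_map_iff hpair hsetm]
            exact Filter.Eventually.of_forall fun ω => ⟨hξ₁0 ω, hξ₂0 ω⟩)
        m n (Nat.cast_nonneg m) (Nat.cast_nonneg n)
      have t2 := laplace_tendsto
        (ρ := (μ0.prod u).map (fun q : ℝ × ℝ => (q.2 * V q, (1 - q.2) * V q)))
        (by rw [ae_map_iff hpair' hsetm]
            filter_upwards [haeprod] with q hq
            have h1 : 0 ≤ V q := le_max_right _ _
            have h2 : 0 ≤ q.2 := le_of_lt hq.2.1
            have h3 : 0 ≤ 1 - q.2 := by have := hq.2.2; linarith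
            exact ⟨mul_nonneg h2 h1, mul_nonneg h3 h1⟩)
        m n (Nat.cast_nonneg m) (Nat.cast_nonneg n)
      have hseq : ∀ k : ℕ,
          ∫ p, Real.exp (-((m:ℝ) + 1/(k+1)) * p.1 - ((n:ℝ) + 1/(k+1)) * p.2)
              ∂(P.map (fun ω => (ξ₁ ω, ξ₂ ω)))
            = ∫ p, Real.exp (-((m:ℝ) + 1/(k+1)) * p.1 - ((n:ℝ) + 1/(k+1)) * p.2)
              ∂((μ0.prod u).map (fun q : ℝ × ℝ => (q.2 * V q, (1 - q.2) * V q))) := by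
        intro k
        have hm : (0:ℝ) < (m:ℝ) + 1/(k+1) := by positivity
        have hn : (0:ℝ) < (n:ℝ) + 1/(k+1) := by positivity
        rw [hμlap, hνlap, hpos _ _ hm hn]
      rw [Filter.tendsto_congr hseq] at t1
      exact tendsto_nhds_unique t1 t2
end

section
/- Let (ξ₁, ξ₂) be a pair of nonnegative real random variables belonging to the class 𝒦. Then for all v ≥ 0 and w ≥ 0, P(ξ₁ > v and ξ₂ > w) = P(ξ₁ > v + w); in particular, the joint survival probability P(ξ₁ > v, ξ₂ > w) depends on (v, w) only through the sum v + w. -/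
/-!
Conditionally on `V = x > 0`, the event `{ξ₁ > v, ξ₂ > w}` is `{s ∈ (v/x, 1 - w/x)}` and the
event `{ξ₁ > v + w}` is `{s ∈ ((v+w)/x, 1)}`: two intervals of the same length `1 - (v+w)/x`,
hence of the same probability under the uniform law of `s`. When `x ≤ 0` both events are empty.
Integrating over the law of `V`, which is legitimate by independence, gives the claim.
-/

open MeasureTheory ProbabilityTheory Set

lemma volume_restrict_Ioo_setOf_lt_mul_and_lt_one_sub_mul {v w : ℝ} (hv : 0 ≤ v) (hw : 0 ≤ w)
    (x : ℝ) :
    volume.restrict (Ioo (0 : ℝ) 1) {t | v < t * x ∧ w < (1 - t) * x} =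
      volume.restrict (Ioo (0 : ℝ) 1) {t | v + w < t * x} := by
  rw [Measure.restrict_apply' measurableSet_Ioo, Measure.restrict_apply' measurableSet_Ioo]
  rcases le_or_gt x 0 with hx | hx
  · have hnonpos : ∀ t ∈ Ioo (0 : ℝ) 1, t * x ≤ 0 := fun t ht =>
      mul_nonpos_of_nonneg_of_nonpos ht.1.le hx
    have h₁ : {t | v < t * x ∧ w < (1 - t) * x} ∩ Ioo 0 1 = ∅ :=
      eq_empty_of_forall_notMem fun t ⟨⟨h, _⟩, ht⟩ => by linarith [hnonpos t ht]
    have h₂ : {t | v + w < t * x} ∩ Ioo 0 1 = ∅ :=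
      eq_empty_of_forall_notMem fun t ⟨(h : v + w < t * x), ht⟩ => by linarith [hnonpos t ht]
    rw [h₁, h₂]
  · have h₁ : {t | v < t * x ∧ w < (1 - t) * x} ∩ Ioo 0 1 = Ioo (v / x) (1 - w / x) := by
      ext t
      have hv' : v < t * x ↔ v / x < t := (div_lt_iff₀ hx).symm
      have hw' : w < (1 - t) * x ↔ t < 1 - w / x := by rw [lt_sub_comm, div_lt_iff₀ hx]
      have : 0 ≤ v / x := div_nonneg hv hx.le
      have : 0 ≤ w / x := div_nonneg hw hx.le
      simp only [mem_inter_iff, mem_ofPred_eq, mem_Ioo, hv', hw']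
      constructor
      · exact fun h => h.1
      · exact fun h => ⟨h, by linarith, by linarith⟩
    have h₂ : {t | v + w < t * x} ∩ Ioo 0 1 = Ioo ((v + w) / x) 1 := by
      ext t
      have : 0 ≤ (v + w) / x := div_nonneg (add_nonneg hv hw) hx.le
      simp only [mem_inter_iff, mem_ofPred_eq, mem_Ioo, ← div_lt_iff₀ hx]
      constructor
      · exact fun ⟨h, _, h'⟩ => ⟨h, h'⟩
      · exact fun ⟨h, h'⟩ => ⟨h, by linarith, h'⟩
    rw [h₁, h₂, Real.volume_Ioo, Real.volume_Ioo, add_div]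
    ring_nf

lemma ProbabilityTheory.IndepFun.measure_preimage_prod_eq_lintegral {Ω α β : Type*} [MeasurableSpace Ω]
    [MeasurableSpace α] [MeasurableSpace β] {μ : Measure Ω} [IsFiniteMeasure μ]
    {X : Ω → α} {Y : Ω → β} (hX : Measurable X) (hY : Measurable Y) (hXY : IndepFun X Y μ)
    {A : Set (α × β)} (hA : MeasurableSet A) :
    μ ((fun ω => (X ω, Y ω)) ⁻¹' A) = ∫⁻ x, μ.map Y (Prod.mk x ⁻¹' A) ∂μ.map X := by
  rw [← Measure.map_apply (hX.prodMk hY) hA,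
    (indepFun_iff_map_prod_eq_prod_map_map hX.aemeasurable hY.aemeasurable).1 hXY,
    Measure.prod_apply hA]

lemma measure_lt_mul_and_lt_one_sub_mul_eq_of_uniform {Ω : Type*} [MeasurableSpace Ω]
    {μ : Measure Ω} [IsFiniteMeasure μ] {V s : Ω → ℝ} (hV : Measurable V) (hs : Measurable s)
    (hsUnif : μ.map s = volume.restrict (Ioo (0 : ℝ) 1)) (hVs : IndepFun V s μ)
    {v w : ℝ} (hv : 0 ≤ v) (hw : 0 ≤ w) :
    μ {ω | v < s ω * V ω ∧ w < (1 - s ω) * V ω} = μ {ω | v + w < s ω * V ω} := by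
  have hA : MeasurableSet {p : ℝ × ℝ | v < p.2 * p.1 ∧ w < (1 - p.2) * p.1} := by
    measurability
  have hB : MeasurableSet {p : ℝ × ℝ | v + w < p.2 * p.1} := by measurability
  change μ ((fun ω => (V ω, s ω)) ⁻¹' {p : ℝ × ℝ | v < p.2 * p.1 ∧ w < (1 - p.2) * p.1}) =
    μ ((fun ω => (V ω, s ω)) ⁻¹' {p : ℝ × ℝ | v + w < p.2 * p.1})
  rw [hVs.measure_preimage_prod_eq_lintegral hV hs hA,
    hVs.measure_preimage_prod_eq_lintegral hV hs hB, hsUnif]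
  exact lintegral_congr fun x => volume_restrict_Ioo_setOf_lt_mul_and_lt_one_sub_mul hv hw x

lemma measure_preimage_eq_of_map_eq {Ω Ω' α : Type*} [MeasurableSpace Ω] [MeasurableSpace Ω']
    [MeasurableSpace α] {μ : Measure Ω} {ν : Measure Ω'} {f : Ω → α} {g : Ω' → α}
    (hf : Measurable f) (hg : Measurable g) (h : μ.map f = ν.map g)
    {A : Set α} (hA : MeasurableSet A) : μ (f ⁻¹' A) = ν (g ⁻¹' A) := by
  rw [← Measure.map_apply hf hA, h, Measure.map_apply hg hA]

theorem stmt4_general {Ω Ω' : Type*} [MeasurableSpace Ω] [MeasurableSpace Ω']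
    (P : Measure Ω)
    (P' : Measure Ω') [IsProbabilityMeasure P']
    (ξ₁ ξ₂ : Ω → ℝ) (hξ₁m : Measurable ξ₁) (hξ₂m : Measurable ξ₂)
    (V s : Ω' → ℝ) (hVm : Measurable V) (hsm : Measurable s)
    (hsUnif : P'.map s = volume.restrict (Set.Ioo (0:ℝ) 1))
    (hIndep : IndepFun V s P')
    (hlaw : P.map (fun ω => (ξ₁ ω, ξ₂ ω)) =
      P'.map (fun ω => (s ω * V ω, (1 - s ω) * V ω))) :
    ∀ v w : ℝ, 0 ≤ v → 0 ≤ w →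
      P {ω | v < ξ₁ ω ∧ w < ξ₂ ω} = P {ω | v + w < ξ₁ ω} := by
  intro v w hv hw
  have hξ : Measurable fun ω => (ξ₁ ω, ξ₂ ω) := hξ₁m.prodMk hξ₂m
  have hsV : Measurable fun ω => (s ω * V ω, (1 - s ω) * V ω) := by fun_prop
  have hA : MeasurableSet {p : ℝ × ℝ | v < p.1 ∧ w < p.2} := by measurability
  have hB : MeasurableSet {p : ℝ × ℝ | v + w < p.1} := by measurability
  calc P {ω | v < ξ₁ ω ∧ w < ξ₂ ω}
      = P' {ω | v < s ω * V ω ∧ w < (1 - s ω) * V ω} :=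
        measure_preimage_eq_of_map_eq hξ hsV hlaw hA
    _ = P' {ω | v + w < s ω * V ω} :=
        measure_lt_mul_and_lt_one_sub_mul_eq_of_uniform hVm hsm hsUnif hIndep hv hw
    _ = P {ω | v + w < ξ₁ ω} := (measure_preimage_eq_of_map_eq hξ hsV hlaw hB).symm

/-- If `(ξ₁, ξ₂)` belongs to the class `𝒦`, then for all
`v ≥ 0` and `w ≥ 0`, `P(ξ₁ > v, ξ₂ > w) = P(ξ₁ > v + w)`; in particular the
joint survival probability depends only on the sum `v + w`. -/
theorem stmt4 {Ω Ω' : Type*} [MeasurableSpace Ω] [MeasurableSpace Ω']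
    (P : Measure Ω) [IsProbabilityMeasure P]
    (P' : Measure Ω') [IsProbabilityMeasure P']
    (ξ₁ ξ₂ : Ω → ℝ) (hξ₁m : Measurable ξ₁) (hξ₂m : Measurable ξ₂)
    (hξ₁0 : ∀ ω, 0 ≤ ξ₁ ω) (hξ₂0 : ∀ ω, 0 ≤ ξ₂ ω)
    (V s : Ω' → ℝ) (hVm : Measurable V) (hsm : Measurable s)
    (hV0 : ∀ ω, 0 ≤ V ω)
    (hsUnif : P'.map s = volume.restrict (Set.Ioo (0:ℝ) 1))
    (hIndep : IndepFun V s P')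
    (hlaw : P.map (fun ω => (ξ₁ ω, ξ₂ ω)) =
      P'.map (fun ω => (s ω * V ω, (1 - s ω) * V ω))) :
    ∀ v w : ℝ, 0 ≤ v → 0 ≤ w →
      P {ω | v < ξ₁ ω ∧ w < ξ₂ ω} = P {ω | v + w < ξ₁ ω} :=
  stmt4_general P P' ξ₁ ξ₂ hξ₁m hξ₂m V s hVm hsm hsUnif hIndep hlaw
end

section
/- For all real μ > 0 and y > 0, ∫_0^∞ 2μ e^{−2μx} · ( (e^{2μ(x+y)} − e^{2μx}) / (e^{2μ(x+y)} − 1) )² dx = 1 − e^{−2μy}. -/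
open MeasureTheory

/-- for all `μ > 0` and `y > 0`,
`∫_0^∞ 2μ e^{-2μx} ((e^{2μ(x+y)} - e^{2μx})/(e^{2μ(x+y)} - 1))² dx = 1 - e^{-2μy}`. -/
theorem stmt9 (μ y : ℝ) (hμ : 0 < μ) (hy : 0 < y) :
    (∫ x in Set.Ioi (0:ℝ),
        2 * μ * Real.exp (-2 * μ * x) *
          ((Real.exp (2 * μ * (x + y)) - Real.exp (2 * μ * x)) /
            (Real.exp (2 * μ * (x + y)) - 1)) ^ 2) =
      1 - Real.exp (-2 * μ * y) := by
  have ha1 : 1 < Real.exp (2*μ*y) := by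
    rw [show (1:ℝ) = Real.exp 0 from (Real.exp_zero).symm]
    exact Real.exp_lt_exp.mpr (by positivity)
  set a := Real.exp (2*μ*y) with ha_def
  have ha0 : 0 < a := lt_trans one_pos ha1
  set F : ℝ → ℝ := fun x => (-(a-1)^2/a) / (a * Real.exp (2*μ*x) - 1) with hF
  have hD : ∀ x : ℝ, 0 ≤ x → 0 < a * Real.exp (2*μ*x) - 1 := by
    intro x hx
    have h1 : 1 ≤ Real.exp (2*μ*x) := Real.one_le_exp (by positivity)
    nlinarith
  have key : ∀ x ∈ Set.Ioi (0:ℝ), HasDerivAt F (2 * μ * Real.exp (-2 * μ * x) *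
          ((Real.exp (2 * μ * (x + y)) - Real.exp (2 * μ * x)) /
            (Real.exp (2 * μ * (x + y)) - 1)) ^ 2) x := by
    intro x hx
    have hx0 : (0:ℝ) ≤ x := le_of_lt hx
    have hDx := hD x hx0
    have hlin : HasDerivAt (fun x : ℝ => 2*μ*x) (2*μ) x := by
      simpa using (hasDerivAt_id x).const_mul (2*μ)
    have hexp : HasDerivAt (fun x : ℝ => a * Real.exp (2*μ*x) - 1)
        (a * (Real.exp (2*μ*x) * (2*μ))) x := by
      simpa using ((hlin.exp).const_mul a).sub_const 1
    have hdiv := (hasDerivAt_const x (-(a-1)^2/a)).div hexp (ne_of_gt hDx)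
    refine hdiv.congr_deriv ?_
    have he1 : Real.exp (2*μ*(x+y)) = a * Real.exp (2*μ*x) := by
      rw [ha_def, ← Real.exp_add]; ring_nf
    have he2 : Real.exp (-2*μ*x) = 1 / Real.exp (2*μ*x) := by
      rw [eq_div_iff (Real.exp_ne_zero _), ← Real.exp_add]
      norm_num
    have hepos : (0:ℝ) < Real.exp (2*μ*x) := Real.exp_pos _
    rw [he1, he2]
    field_simp
    ring
  have hnonneg : ∀ x ∈ Set.Ioi (0:ℝ), 0 ≤ 2 * μ * Real.exp (-2 * μ * x) *
          ((Real.exp (2 * μ * (x + y)) - Real.exp (2 * μ * x)) /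
            (Real.exp (2 * μ * (x + y)) - 1)) ^ 2 := by
    intro x _; positivity
  have hcont : ContinuousWithinAt F (Set.Ici 0) 0 := by
    apply ContinuousAt.continuousWithinAt
    apply ContinuousAt.div continuousAt_const
    · fun_prop
    · exact ne_of_gt (hD 0 le_rfl)
  have htend : Filter.Tendsto F Filter.atTop (nhds 0) := by
    apply Filter.Tendsto.div_atTop (tendsto_const_nhds)
    have h1 : Filter.Tendsto (fun x : ℝ => 2*μ*x) Filter.atTop Filter.atTop :=
      Filter.tendsto_id.const_mul_atTop (by positivity)
    have h2 := (Real.tendsto_exp_atTop.comp h1).const_mul_atTop ha0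
    simpa [sub_eq_add_neg] using Filter.tendsto_atTop_add_const_right Filter.atTop (-1) h2
  rw [MeasureTheory.integral_Ioi_of_hasDerivAt_of_nonneg hcont key hnonneg htend]
  have he3 : Real.exp (-2*μ*y) = 1/a := by
    rw [ha_def, eq_div_iff (Real.exp_ne_zero _), ← Real.exp_add]
    norm_num
  rw [he3, hF]
  simp only [mul_zero, Real.exp_zero, mul_one]
  have hane : a - 1 ≠ 0 := ne_of_gt (by linarith)
  field_simp
  ring
end

section
/- For all real μ > 0 and all α > 0, β > 0, ∫_0^∞ ∫_0^∞ e^{−α t − β s} · ( μ / √(2π (t+s)³) ) · e^{−μ²(t+s)/2} dt ds = 2μ / ( √(2α + μ²) + √(2β + μ²) ). -/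
open MeasureTheory Set Real

namespace Stmt11Aux

lemma sqrt_cube {u : ℝ} (hu : 0 ≤ u) : Real.sqrt (u ^ 3) = u * Real.sqrt u := by
  have : u ^ 3 = u ^ 2 * u := by ring
  rw [this, Real.sqrt_mul (sq_nonneg u), Real.sqrt_sq hu]

lemma intOn_exp_div_sqrt {b : ℝ} (hb : 0 < b) :
    IntegrableOn (fun u : ℝ => Real.exp (-b * u) / Real.sqrt u) (Ioi 0) := by
  have h := integrableOn_rpow_mul_exp_neg_mul_rpow (p := 1) (s := -(1/2)) (b := b)
    (by norm_num) zero_lt_one hb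
  refine h.congr_fun (fun x hx => ?_) measurableSet_Ioi
  have hx0 : (0:ℝ) < x := hx
  show x ^ (-(1/2) : ℝ) * Real.exp (-b * x ^ (1:ℝ)) = _
  rw [Real.rpow_one, Real.rpow_neg hx0.le, ← Real.sqrt_eq_rpow]
  rw [div_eq_mul_inv, mul_comm]

lemma int_exp_div_sqrt {b : ℝ} (hb : 0 < b) :
    ∫ u in Ioi (0:ℝ), Real.exp (-b * u) / Real.sqrt u
      = Real.sqrt Real.pi / Real.sqrt b := by
  have h := Real.integral_rpow_mul_exp_neg_mul_Ioi (a := 1/2) (r := b) (by norm_num) hb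
  rw [Real.Gamma_one_half_eq] at h
  have e1 : ∀ x ∈ Ioi (0:ℝ), x ^ ((1:ℝ)/2 - 1) * Real.exp (-(b * x))
      = Real.exp (-b * x) / Real.sqrt x := by
    intro x hx
    have hx0 : (0:ℝ) < x := hx
    rw [show ((1:ℝ)/2 - 1) = -(1/2) by norm_num, Real.rpow_neg hx0.le, ← Real.sqrt_eq_rpow,
      neg_mul, div_eq_mul_inv, mul_comm]
  rw [setIntegral_congr_fun measurableSet_Ioi e1] at h
  rw [h, ← Real.sqrt_eq_rpow, one_div, Real.sqrt_inv, ← one_div, div_mul_eq_mul_div, one_mul]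

end Stmt11Aux

namespace Stmt11Aux

lemma exp_sub_exp_le {a b u : ℝ} (hab : a ≤ b) (hu : 0 ≤ u) :
    Real.exp (-a*u) - Real.exp (-b*u) ≤ (b - a) * (u * Real.exp (-a * u)) := by
  have h1 : -((b-a)*u) + 1 ≤ Real.exp (-((b-a)*u)) := Real.add_one_le_exp _
  have h2 : Real.exp (-b*u) = Real.exp (-a*u) * Real.exp (-((b-a)*u)) := by
    rw [← Real.exp_add]; ring_nf
  have h3 : (0:ℝ) < Real.exp (-a*u) := Real.exp_pos _
  nlinarith

lemma exp_sub_exp_nonneg {a b u : ℝ} (hab : a ≤ b) (hu : 0 ≤ u) :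
    0 ≤ Real.exp (-a*u) - Real.exp (-b*u) := by
  have : -b*u ≤ -a*u := by nlinarith
  have := Real.exp_le_exp.2 this
  linarith

lemma abs_exp_sub_exp_le {a b u : ℝ} (hu : 0 ≤ u) :
    |Real.exp (-a*u) - Real.exp (-b*u)| ≤ |b - a| * (u * Real.exp (-(min a b) * u)) := by
  rcases le_total a b with hab | hab
  · rw [abs_of_nonneg (exp_sub_exp_nonneg hab hu), abs_of_nonneg (by linarith), min_eq_left hab]
    exact exp_sub_exp_le hab hu
  · rw [abs_sub_comm, abs_of_nonneg (exp_sub_exp_nonneg hab hu), abs_of_nonpos (by linarith),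
      min_eq_right hab]
    have := exp_sub_exp_le hab hu
    nlinarith [this]

lemma diff_integrableOn {a b : ℝ} (ha : 0 < a) (hb : 0 < b) :
    IntegrableOn (fun u : ℝ => (Real.exp (-a*u) - Real.exp (-b*u)) / (u * Real.sqrt u))
      (Ioi 0) := by
  have hm : 0 < min a b := lt_min ha hb
  have hint : IntegrableOn
      (fun u : ℝ => |b - a| * (Real.exp (-(min a b) * u) / Real.sqrt u)) (Ioi 0) :=
    (intOn_exp_div_sqrt hm).const_mul _
  refine hint.mono' ?_ ?_
  · apply Measurable.aestronglyMeasurable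
    fun_prop
  · rw [ae_restrict_iff' measurableSet_Ioi]
    filter_upwards with u hu
    have hu0 : (0:ℝ) < u := hu
    have hsu : 0 < Real.sqrt u := Real.sqrt_pos.2 hu0
    have hden : 0 < u * Real.sqrt u := by positivity
    rw [Real.norm_eq_abs, abs_div, abs_of_pos hden]
    have h1 := abs_exp_sub_exp_le (a := a) (b := b) hu0.le
    have h2 : |b - a| * (u * Real.exp (-(min a b) * u)) / (u * Real.sqrt u)
        = |b - a| * (Real.exp (-(min a b) * u) / Real.sqrt u) := by
      field_simp
    calc |Real.exp (-a*u) - Real.exp (-b*u)| / (u * Real.sqrt u)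
        ≤ |b - a| * (u * Real.exp (-(min a b) * u)) / (u * Real.sqrt u) := by
          exact (div_le_div_iff_of_pos_right hden).2 h1
      _ = _ := h2

end Stmt11Aux

namespace Stmt11Aux

lemma integral_exp_Ioc {a b u : ℝ} (hab : a ≤ b) (hu : u ≠ 0) :
    ∫ c in Ioc a b, Real.exp (-c * u) = (Real.exp (-a*u) - Real.exp (-b*u)) / u := by
  rw [← intervalIntegral.integral_of_le hab]
  have h : ∀ c : ℝ, -c * u = c * (-u) := fun c => by ring
  simp_rw [h]
  rw [intervalIntegral.integral_comp_mul_right (fun x => Real.exp x) (neg_ne_zero.2 hu),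
    integral_exp, smul_eq_mul]
  rw [show b * -u = -b * u by ring, show a * -u = -a * u by ring, inv_neg, div_eq_mul_inv]
  ring

lemma sqrt_inv_integral {a b : ℝ} (ha : 0 < a) (hab : a ≤ b) :
    ∫ c in Ioc a b, (Real.sqrt c)⁻¹ = 2 * (Real.sqrt b - Real.sqrt a) := by
  rw [← intervalIntegral.integral_of_le hab]
  rw [intervalIntegral.integral_congr (g := fun c : ℝ => c ^ (-(1/2) : ℝ)) ?_]
  · rw [integral_rpow (Or.inl (by norm_num))]
    norm_num
    rw [← Real.sqrt_eq_rpow, ← Real.sqrt_eq_rpow]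
    ring
  · intro c hc
    rw [Set.uIcc_of_le hab] at hc
    have hc0 : 0 < c := lt_of_lt_of_le ha hc.1
    show (Real.sqrt c)⁻¹ = c ^ (-(1/2) : ℝ)
    rw [Real.rpow_neg hc0.le, ← Real.sqrt_eq_rpow]

lemma diff_integral {a b : ℝ} (ha : 0 < a) (hab : a ≤ b) :
    ∫ u in Ioi (0:ℝ), (Real.exp (-a*u) - Real.exp (-b*u)) / (u * Real.sqrt u)
      = 2 * Real.sqrt Real.pi * (Real.sqrt b - Real.sqrt a) := by
  have hb : 0 < b := lt_of_lt_of_le ha hab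
  set μ0 := volume.restrict (Ioi (0:ℝ)) with hμ0
  set ν0 := volume.restrict (Ioc a b) with hν0
  set f : ℝ × ℝ → ℝ := fun p => Real.exp (-p.2 * p.1) / Real.sqrt p.1 with hfdef
  have hfm : AEStronglyMeasurable f (μ0.prod ν0) := by
    apply Measurable.aestronglyMeasurable
    exact (Real.measurable_exp.comp (measurable_snd.neg.mul measurable_fst)).div
      (Real.continuous_sqrt.measurable.comp measurable_fst)
  have hinner : ∀ᵐ u ∂μ0, Integrable (fun c => f (u, c)) ν0 := by
    filter_upwards with u
    have hcont : Continuous fun c : ℝ => Real.exp (-c * u) / Real.sqrt u :=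
      (Real.continuous_exp.comp (continuous_neg.mul continuous_const)).div_const _
    exact hcont.integrableOn_Icc.mono_set Ioc_subset_Icc_self
  have hcompute : ∀ u : ℝ, 0 < u →
      (∫ c in Ioc a b, Real.exp (-c * u) / Real.sqrt u)
        = (Real.exp (-a*u) - Real.exp (-b*u)) / (u * Real.sqrt u) := by
    intro u hu0
    have hsu : 0 < Real.sqrt u := Real.sqrt_pos.2 hu0
    simp_rw [div_eq_mul_inv]
    rw [integral_mul_const, ← div_eq_mul_inv, integral_exp_Ioc hab hu0.ne', div_div,
      ← div_eq_mul_inv]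
  have hnormeq : ∀ u c : ℝ, ‖f (u, c)‖ = Real.exp (-c * u) / Real.sqrt u := by
    intro u c
    rw [Real.norm_eq_abs, abs_of_nonneg (by positivity)]
  have hint : Integrable f (μ0.prod ν0) := by
    rw [integrable_prod_iff hfm]
    refine ⟨hinner, ?_⟩
    refine (diff_integrableOn ha hb).congr ?_
    filter_upwards [ae_restrict_mem measurableSet_Ioi] with u hu
    simp_rw [hnormeq]
    exact (hcompute u hu).symm
  have hswap := integral_integral_swap (f := fun u c => f (u, c)) hint
  calc ∫ u in Ioi (0:ℝ), (Real.exp (-a*u) - Real.exp (-b*u)) / (u * Real.sqrt u)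
      = ∫ u, (∫ c, f (u, c) ∂ν0) ∂μ0 := by
        refine (setIntegral_congr_fun measurableSet_Ioi fun u hu => ?_).symm
        exact hcompute u hu
    _ = ∫ c, (∫ u, f (u, c) ∂μ0) ∂ν0 := hswap
    _ = ∫ c in Ioc a b, Real.sqrt Real.pi * (Real.sqrt c)⁻¹ := by
        refine setIntegral_congr_fun measurableSet_Ioc fun c hc => ?_
        have hc0 : 0 < c := lt_of_lt_of_le ha hc.1.le
        rw [hμ0]
        show ∫ u in Ioi (0:ℝ), Real.exp (-c * u) / Real.sqrt u = _
        rw [int_exp_div_sqrt hc0, div_eq_mul_inv]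
    _ = Real.sqrt Real.pi * ∫ c in Ioc a b, (Real.sqrt c)⁻¹ := integral_const_mul _ _
    _ = 2 * Real.sqrt Real.pi * (Real.sqrt b - Real.sqrt a) := by
        rw [sqrt_inv_integral ha hab]; ring

lemma diff_integral' {a b : ℝ} (ha : 0 < a) (hb : 0 < b) :
    ∫ u in Ioi (0:ℝ), (Real.exp (-a*u) - Real.exp (-b*u)) / (u * Real.sqrt u)
      = 2 * Real.sqrt Real.pi * (Real.sqrt b - Real.sqrt a) := by
  rcases le_total a b with hab | hab
  · exact diff_integral ha hab
  · have h : (fun u : ℝ => (Real.exp (-a*u) - Real.exp (-b*u)) / (u * Real.sqrt u))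
        = fun u => -((Real.exp (-b*u) - Real.exp (-a*u)) / (u * Real.sqrt u)) := by
      funext u; ring
    rw [h, integral_neg, diff_integral hb hab]
    ring

end Stmt11Aux

namespace Stmt11Aux

lemma shift_Ioi (t : ℝ) (φ : ℝ → ℝ) :
    ∫ s in Ioi (0:ℝ), φ (t + s) = ∫ u in Ioi t, φ u := by
  have hemb : MeasurableEmbedding (fun x : ℝ => t + x) :=
    (MeasurableEquiv.addLeft t).measurableEmbedding
  have h := (measurePreserving_add_left volume t).setIntegral_preimage_emb hemb φ (Ioi t)
  have hpre : (fun x : ℝ => t + x) ⁻¹' Ioi t = Ioi 0 := by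
    ext x; simp
  rwa [hpre] at h

end Stmt11Aux

open Stmt11Aux in
/-- for all `μ > 0`, `α > 0`, `β > 0`,
`∫_0^∞ ∫_0^∞ e^{-αt - βs} (μ/√(2π(t+s)³)) e^{-μ²(t+s)/2} dt ds
  = 2μ/(√(2α + μ²) + √(2β + μ²))`. -/
theorem stmt11 (μ α β : ℝ) (hμ : 0 < μ) (hα : 0 < α) (hβ : 0 < β) :
    (∫ t in Set.Ioi (0:ℝ), ∫ s in Set.Ioi (0:ℝ),
        Real.exp (-α * t - β * s) *
          (μ / Real.sqrt (2 * Real.pi * (t + s) ^ 3)) *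
          Real.exp (-μ ^ 2 * (t + s) / 2)) =
      2 * μ / (Real.sqrt (2 * α + μ ^ 2) + Real.sqrt (2 * β + μ ^ 2)) := by
  have hπ : (0:ℝ) < Real.pi := Real.pi_pos
  have h2π : (0:ℝ) < Real.sqrt (2 * Real.pi) := Real.sqrt_pos.2 (by positivity)
  have hβc : (0:ℝ) < β + μ^2/2 := by positivity
  have hαc : (0:ℝ) < α + μ^2/2 := by positivity
  set μ0 := volume.restrict (Ioi (0:ℝ)) with hμ0
  set g : ℝ → ℝ := fun u => Real.exp (-(β + μ^2/2) * u) *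
      (μ / (Real.sqrt (2 * Real.pi) * (u * Real.sqrt u))) with hg
  have hg_nonneg : ∀ u : ℝ, 0 < u → 0 ≤ g u := by
    intro u hu
    have := Real.sqrt_nonneg u
    apply mul_nonneg (Real.exp_nonneg _)
    positivity
  have hgm : Measurable g := by
    apply Measurable.mul
    · exact Real.measurable_exp.comp (measurable_id.const_mul _)
    · exact measurable_const.div
        ((measurable_const.mul (measurable_id.mul Real.continuous_sqrt.measurable)))
  set F : ℝ × ℝ → ℝ := fun p =>
      Set.indicator {q : ℝ × ℝ | q.1 < q.2} (fun q => Real.exp ((β - α) * q.1) * g q.2) p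
      with hF
  have hF1 : ∀ t u : ℝ, F (t, u)
      = Set.indicator (Ioi t) (fun v => Real.exp ((β - α) * t) * g v) u := by
    intro t u
    by_cases h : t < u <;>
      simp [hF, Set.indicator_apply, h, Set.mem_Ioi, Set.mem_setOf_eq]
  have hF2 : ∀ t u : ℝ, F (t, u)
      = Set.indicator (Iio u) (fun w => Real.exp ((β - α) * w) * g u) t := by
    intro t u
    by_cases h : t < u <;>
      simp [hF, Set.indicator_apply, h, Set.mem_Ioi, Set.mem_setOf_eq]
  -- Step 1 : inner integral
  have step1 : ∀ t ∈ Ioi (0:ℝ),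
      (∫ s in Set.Ioi (0:ℝ),
        Real.exp (-α * t - β * s) *
          (μ / Real.sqrt (2 * Real.pi * (t + s) ^ 3)) *
          Real.exp (-μ ^ 2 * (t + s) / 2))
      = ∫ u, F (t, u) ∂μ0 := by
    intro t ht
    have ht0 : (0:ℝ) < t := ht
    have e1 : EqOn
        (fun s : ℝ => Real.exp (-α * t - β * s) *
          (μ / Real.sqrt (2 * Real.pi * (t + s) ^ 3)) *
          Real.exp (-μ ^ 2 * (t + s) / 2))
        (fun s : ℝ => Real.exp ((β - α) * t) * g (t + s)) (Ioi 0) := by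
      intro s hs
      have hs0 : (0:ℝ) < s := hs
      have hu : (0:ℝ) < t + s := by linarith
      have hsq : Real.sqrt (2 * Real.pi * (t + s) ^ 3)
          = Real.sqrt (2 * Real.pi) * ((t + s) * Real.sqrt (t + s)) := by
        rw [Real.sqrt_mul (by positivity), sqrt_cube hu.le]
      show _ = Real.exp ((β - α) * t) * g (t + s)
      rw [hg]
      simp only []
      rw [hsq, mul_right_comm, ← Real.exp_add,
        show -α * t - β * s + -μ ^ 2 * (t + s) / 2
          = (β - α) * t + -(β + μ ^ 2 / 2) * (t + s) from by ring, Real.exp_add]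
      ring
    rw [setIntegral_congr_fun measurableSet_Ioi e1]
    rw [shift_Ioi t (fun u => Real.exp ((β - α) * t) * g u)]
    have : ∫ u, F (t, u) ∂μ0 = ∫ u in Ioi t, Real.exp ((β - α) * t) * g u := by
      simp_rw [hF1]
      rw [hμ0, integral_indicator measurableSet_Ioi,
        Measure.restrict_restrict measurableSet_Ioi,
        Set.inter_eq_left.2 (Ioi_subset_Ioi ht0.le)]
    rw [this]
  -- measurability of F
  have hFsm : StronglyMeasurable F := by
    apply Measurable.stronglyMeasurable
    apply Measurable.indicator
    · exact (Real.measurable_exp.comp (measurable_fst.const_mul _)).mul (hgm.comp measurable_snd)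
    · exact measurableSet_lt measurable_fst measurable_snd
  have hFm : AEStronglyMeasurable F (μ0.prod μ0) := hFsm.aestronglyMeasurable
  -- inner t-integrability
  have hinner2 : ∀ᵐ u ∂μ0, Integrable (fun t => F (t, u)) μ0 := by
    filter_upwards [ae_restrict_mem measurableSet_Ioi] with u hu
    simp_rw [hF2]
    rw [integrable_indicator_iff measurableSet_Iio]
    have hcont : Continuous fun t : ℝ => Real.exp ((β - α) * t) * g u :=
      (Real.continuous_exp.comp (continuous_const.mul continuous_id)).mul continuous_const
    have h1 : IntegrableOn (fun t : ℝ => Real.exp ((β - α) * t) * g u) (Icc 0 u) volume :=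
      hcont.integrableOn_Icc
    rw [IntegrableOn, hμ0, Measure.restrict_restrict measurableSet_Iio, Set.inter_comm,
      Set.Ioi_inter_Iio]
    exact h1.mono_set Ioo_subset_Icc_self
  -- value of the inner t-integral (no norms)
  have hval : ∀ u : ℝ, 0 < u →
      (∫ t, F (t, u) ∂μ0) = (∫ t in Ioo 0 u, Real.exp ((β - α) * t)) * g u := by
    intro u hu
    have : ∀ t : ℝ, F (t, u) = Set.indicator (Iio u)
        (fun w => Real.exp ((β - α) * w) * g u) t := fun t => hF2 t u
    simp_rw [this]
    rw [hμ0, integral_indicator measurableSet_Iio,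
      Measure.restrict_restrict measurableSet_Iio, Set.inter_comm, Set.Ioi_inter_Iio,
      integral_mul_const]
  -- integrability of the norm-integral in u
  have hγpos : (0:ℝ) < β + μ^2/2 - max (β - α) 0 := by
    rcases le_total (β - α) 0 with h | h
    · rw [max_eq_right h, sub_zero]; positivity
    · rw [max_eq_left h]; nlinarith [sq_nonneg μ]
  have hbound : Integrable (fun u => ∫ t, ‖F (t, u)‖ ∂μ0) μ0 := by
    have hMint : Integrable (fun u : ℝ =>
        Real.exp (-(β + μ^2/2 - max (β - α) 0) * u) / Real.sqrt u
          * (μ / Real.sqrt (2*Real.pi))) μ0 :=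
      (intOn_exp_div_sqrt hγpos).mul_const _
    refine hMint.mono' (hFsm.norm.integral_prod_left').aestronglyMeasurable ?_
    filter_upwards [ae_restrict_mem measurableSet_Ioi] with u hu
    have hu0 : (0:ℝ) < u := hu
    have hsu : 0 < Real.sqrt u := Real.sqrt_pos.2 hu0
    have hnormF : ∀ t : ℝ, ‖F (t, u)‖ = F (t, u) := by
      intro t
      rw [Real.norm_eq_abs, abs_of_nonneg]
      rw [hF2]
      apply Set.indicator_nonneg
      intro w _
      exact mul_nonneg (Real.exp_nonneg _) (hg_nonneg u hu0)
    have hval2 : (∫ t, ‖F (t, u)‖ ∂μ0) = ∫ t in Ioo 0 u, Real.exp ((β - α) * t) * g u := by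
      simp_rw [hnormF]
      rw [hval u hu0, ← integral_mul_const]
    have hIoo : (volume (Ioo (0:ℝ) u)).toReal = u := by
      rw [Real.volume_Ioo, ENNReal.toReal_ofReal (by linarith)]; ring
    rw [Real.norm_eq_abs]
    have hle : |∫ t, ‖F (t, u)‖ ∂μ0| ≤ (Real.exp (max (β - α) 0 * u) * g u) * u := by
      rw [hval2, ← Real.norm_eq_abs]
      calc ‖∫ t in Ioo 0 u, Real.exp ((β - α) * t) * g u‖
          ≤ (Real.exp (max (β - α) 0 * u) * g u) * (volume (Ioo (0:ℝ) u)).toReal := by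
            apply norm_setIntegral_le_of_norm_le_const
            · rw [Real.volume_Ioo]; exact ENNReal.ofReal_lt_top
            · intro t htm
              rw [Real.norm_eq_abs,
                abs_of_nonneg (mul_nonneg (Real.exp_nonneg _) (hg_nonneg u hu0))]
              refine mul_le_mul_of_nonneg_right ?_ (hg_nonneg u hu0)
              apply Real.exp_le_exp.2
              rcases le_total (β - α) 0 with h | h
              · have h1 : (β - α) * t ≤ 0 := mul_nonpos_of_nonpos_of_nonneg h htm.1.le
                have h2 : 0 ≤ max (β - α) 0 * u := mul_nonneg (le_max_right _ _) hu0.le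
                linarith
              · rw [max_eq_left h]
                have := mul_le_mul_of_nonneg_left htm.2.le h
                linarith
        _ = _ := by rw [hIoo]
    refine hle.trans (le_of_eq ?_)
    rw [hg]
    simp only []
    rw [show -(β + μ^2/2 - max (β - α) 0) * u = max (β - α) 0 * u + -(β + μ^2/2) * u
      from by ring, Real.exp_add]
    field_simp
  have hFint : Integrable F (μ0.prod μ0) := (integrable_prod_iff' hFm).2 ⟨hinner2, hbound⟩
  have hswap := integral_integral_swap (f := fun t u => F (t, u)) hFint
  have main : (∫ t in Set.Ioi (0:ℝ), ∫ s in Set.Ioi (0:ℝ),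
      Real.exp (-α * t - β * s) * (μ / Real.sqrt (2 * Real.pi * (t + s) ^ 3)) *
        Real.exp (-μ ^ 2 * (t + s) / 2))
      = ∫ u in Ioi (0:ℝ), (∫ t in Ioo 0 u, Real.exp ((β - α) * t)) * g u := by
    calc (∫ t in Set.Ioi (0:ℝ), ∫ s in Set.Ioi (0:ℝ),
        Real.exp (-α * t - β * s) * (μ / Real.sqrt (2 * Real.pi * (t + s) ^ 3)) *
          Real.exp (-μ ^ 2 * (t + s) / 2))
        = ∫ t, (∫ u, F (t, u) ∂μ0) ∂μ0 := setIntegral_congr_fun measurableSet_Ioi step1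
      _ = ∫ u, (∫ t, F (t, u) ∂μ0) ∂μ0 := hswap
      _ = ∫ u in Ioi (0:ℝ), (∫ t in Ioo 0 u, Real.exp ((β - α) * t)) * g u :=
          setIntegral_congr_fun measurableSet_Ioi fun u hu => hval u hu
  rw [main]
  by_cases hδ : β - α = 0
  · -- the case α = β
    have hαβ : α = β := by linarith [sub_eq_zero.1 hδ]
    have hcongr : EqOn (fun u : ℝ => (∫ t in Ioo 0 u, Real.exp ((β - α) * t)) * g u)
        (fun u : ℝ => μ / Real.sqrt (2*Real.pi)
          * (Real.exp (-(β + μ^2/2) * u) / Real.sqrt u)) (Ioi 0) := by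
      intro u hu
      have hu0 : (0:ℝ) < u := hu
      have hsu : 0 < Real.sqrt u := Real.sqrt_pos.2 hu0
      show (∫ t in Ioo 0 u, Real.exp ((β - α) * t)) * g u = _
      rw [hδ]
      simp only [zero_mul, Real.exp_zero]
      rw [setIntegral_const, smul_eq_mul, mul_one, Real.volume_real_Ioo_of_le hu0.le, hg]
      simp only []
      field_simp
      ring
    rw [setIntegral_congr_fun measurableSet_Ioi hcongr, integral_const_mul,
      int_exp_div_sqrt hβc]
    have h2a : Real.sqrt (2*α + μ^2) = Real.sqrt 2 * Real.sqrt (β + μ^2/2) := by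
      rw [show 2*α + μ^2 = 2*(β + μ^2/2) by rw [hαβ]; ring,
        Real.sqrt_mul (by norm_num : (0:ℝ) ≤ 2)]
    have h2b : Real.sqrt (2*β + μ^2) = Real.sqrt 2 * Real.sqrt (β + μ^2/2) := by
      rw [show 2*β + μ^2 = 2*(β + μ^2/2) by ring,
        Real.sqrt_mul (by norm_num : (0:ℝ) ≤ 2)]
    have h2pi : Real.sqrt (2*Real.pi) = Real.sqrt 2 * Real.sqrt Real.pi :=
      Real.sqrt_mul (by norm_num) _
    have hs2 : (0:ℝ) < Real.sqrt 2 := Real.sqrt_pos.2 (by norm_num)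
    have hsπ : (0:ℝ) < Real.sqrt Real.pi := Real.sqrt_pos.2 hπ
    have hsβ : (0:ℝ) < Real.sqrt (β + μ^2/2) := Real.sqrt_pos.2 hβc
    rw [h2a, h2b, h2pi]
    field_simp
    ring
  · -- the case α ≠ β
    have hw : ∀ u : ℝ, 0 < u → (∫ t in Ioo 0 u, Real.exp ((β - α) * t))
        = (Real.exp ((β - α) * u) - 1)/(β - α) := by
      intro u hu0
      rw [← integral_Ioc_eq_integral_Ioo, ← intervalIntegral.integral_of_le hu0.le]
      simp_rw [show ∀ t : ℝ, (β - α) * t = t * (β - α) from fun t => by ring]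
      rw [intervalIntegral.integral_comp_mul_right (fun x => Real.exp x) hδ,
        integral_exp, smul_eq_mul, zero_mul, Real.exp_zero,
        show u * (β - α) = (β - α) * u from by ring, mul_comm, ← div_eq_mul_inv]
    have hcongr : EqOn (fun u : ℝ => (∫ t in Ioo 0 u, Real.exp ((β - α) * t)) * g u)
        (fun u : ℝ => μ / (Real.sqrt (2*Real.pi) * (β - α))
          * ((Real.exp (-(α + μ^2/2) * u) - Real.exp (-(β + μ^2/2) * u))
              / (u * Real.sqrt u))) (Ioi 0) := by
      intro u hu
      have hu0 : (0:ℝ) < u := hu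
      have hsu : 0 < Real.sqrt u := Real.sqrt_pos.2 hu0
      show (∫ t in Ioo 0 u, Real.exp ((β - α) * t)) * g u = _
      rw [hw u hu0, hg]
      simp only []
      have he : Real.exp (-(α + μ^2/2) * u)
          = Real.exp ((β - α) * u) * Real.exp (-(β + μ^2/2) * u) := by
        rw [← Real.exp_add]; congr 1; ring
      rw [he]
      field_simp
    rw [setIntegral_congr_fun measurableSet_Ioi hcongr, integral_const_mul,
      diff_integral' hαc hβc]
    have hA2 : Real.sqrt (α + μ^2/2) ^ 2 = α + μ^2/2 := Real.sq_sqrt hαc.le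
    have hB2 : Real.sqrt (β + μ^2/2) ^ 2 = β + μ^2/2 := Real.sq_sqrt hβc.le
    have hA : (0:ℝ) < Real.sqrt (α + μ^2/2) := Real.sqrt_pos.2 hαc
    have hB : (0:ℝ) < Real.sqrt (β + μ^2/2) := Real.sqrt_pos.2 hβc
    have h2a : Real.sqrt (2*α + μ^2) = Real.sqrt 2 * Real.sqrt (α + μ^2/2) := by
      rw [show 2*α + μ^2 = 2*(α + μ^2/2) by ring,
        Real.sqrt_mul (by norm_num : (0:ℝ) ≤ 2)]
    have h2b : Real.sqrt (2*β + μ^2) = Real.sqrt 2 * Real.sqrt (β + μ^2/2) := by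
      rw [show 2*β + μ^2 = 2*(β + μ^2/2) by ring,
        Real.sqrt_mul (by norm_num : (0:ℝ) ≤ 2)]
    have h2pi : Real.sqrt (2*Real.pi) = Real.sqrt 2 * Real.sqrt Real.pi :=
      Real.sqrt_mul (by norm_num) _
    have hs2 : (0:ℝ) < Real.sqrt 2 := Real.sqrt_pos.2 (by norm_num)
    have hsπ : (0:ℝ) < Real.sqrt Real.pi := Real.sqrt_pos.2 hπ
    have hBA : Real.sqrt (β + μ^2/2) ^ 2 - Real.sqrt (α + μ^2/2) ^ 2 = β - α := by
      rw [hA2, hB2]; ring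
    rw [h2a, h2b, h2pi, ← hBA]
    have hABne : Real.sqrt (β + μ^2/2) ^ 2 - Real.sqrt (α + μ^2/2) ^ 2 ≠ 0 := by
      rw [hBA]; exact hδ
    have hD1ne : Real.sqrt 2 * Real.sqrt Real.pi
        * (Real.sqrt (β + μ^2/2) ^ 2 - Real.sqrt (α + μ^2/2) ^ 2) ≠ 0 :=
      mul_ne_zero (mul_ne_zero hs2.ne' hsπ.ne') hABne
    have hD2 : (0:ℝ) < Real.sqrt 2 * Real.sqrt (α + μ^2/2)
        + Real.sqrt 2 * Real.sqrt (β + μ^2/2) := by positivity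
    rw [div_mul_eq_mul_div, div_eq_div_iff hD1ne hD2.ne']
    ring
end
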